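/- arXiv:0802.0851 — 9 statements merged into one kernel-verified Lean document; each statement's English description precedes it below -/
import Mathlib

section
/- Let α ∈ (0,2) and c ≤ α + 1. Then the function r ↦ e^{c r}/(e^r − 1)^{α+1} is strictly decreasing on (0, ∞). (This shows that every Lamperti stable distribution belongs to the Jurek class.) -/
open Set

/-
With `p = α + 1`: for `0 < x < y`, `exp (y - x) * (exp x - 1) = exp y - exp (y - x) < exp y - 1`.
Raising this to the power `p` and using `exp (c * (y - x)) ≤ exp (p * (y - x))` compares the
density at `y` with the density at `x`.
-/

namespace Real

theorem exp_sub_mul_exp_sub_one_lt {x y : ℝ} (h : x < y) :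
    exp (y - x) * (exp x - 1) < exp y - 1 := by
  rw [mul_sub_one, ← exp_add, sub_add_cancel]
  linarith [one_lt_exp_iff.2 (sub_pos.2 h)]

theorem strictAntiOn_exp_mul_div_exp_sub_one_rpow {c p : ℝ} (hp : 0 < p) (hc : c ≤ p) :
    StrictAntiOn (fun r => exp (c * r) / (exp r - 1) ^ p) (Ioi 0) := by
  intro x (hx : 0 < x) y _ hxy
  have hx1 : 0 < exp x - 1 := sub_pos.2 (one_lt_exp_iff.2 hx)
  calc exp (c * y) / (exp y - 1) ^ p
      < exp (c * y) / (exp (y - x) * (exp x - 1)) ^ p := by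
        gcongr
        exact exp_sub_mul_exp_sub_one_lt hxy
    _ = exp (c * y - p * (y - x)) / (exp x - 1) ^ p := by
        rw [mul_rpow (exp_pos _).le hx1.le, ← exp_mul, exp_sub, div_div, mul_comm (y - x)]
    _ ≤ exp (c * x) / (exp x - 1) ^ p := by
        gcongr
        nlinarith

end Real

theorem lamperti_stable_density_strictAnti
    (α c : ℝ) (hα : α ∈ Set.Ioo (0:ℝ) 2) (hc : c ≤ α + 1) :
    StrictAntiOn (fun r : ℝ => Real.exp (c * r) / (Real.exp r - 1) ^ (α + 1))
      (Set.Ioi 0) :=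
  Real.strictAntiOn_exp_mul_div_exp_sub_one_rpow (by linarith [hα.1]) hc
end

section
/- Let α ∈ (0,2) and c ≤ α + 1/2. Then the function r ↦ r · e^{c r}/(e^r − 1)^{α+1} is strictly decreasing on (0, ∞). Equivalently, for all r > 0 one has e^r (1 + (c − α − 1) r) − c r − 1 < 0. (This is the key step proving that a Lamperti stable distribution with f(ξ) ≤ α + 1/2 for all ξ is self-decomposable.) -/
/-!
The derivative of `r ↦ r e^{cr} / (e^r - 1)^{α+1}` is `e^{cr} N(r) / (e^r - 1)^{α+2}` with
`N(r) = e^r (1 + (c - α - 1) r) - c r - 1`, so it suffices that `N < 0` on `(0, ∞)`. Writing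
`d = α + 1/2 - c ≥ 0`,
`N(r) = (e^r (2 - r) - (2 + r)) / 2 - α r - d r (e^r - 1)`,
and the first term is nonpositive by the Padé-type bound `e^r (2 - r) ≤ 2 + r` for `r ≥ 0`
(equivalently `tanh (r/2) ≤ r/2`), while `α r > 0`.
-/

open Set

namespace Real

lemma exp_mul_one_sub_le_one (x : ℝ) : exp x * (1 - x) ≤ 1 := by
  calc exp x * (1 - x) ≤ exp x * exp (-x) :=
        mul_le_mul_of_nonneg_left (one_sub_le_exp_neg x) (exp_pos x).le
    _ = 1 := by rw [← exp_add, add_neg_cancel, exp_zero]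

lemma exp_mul_two_sub_le_two_add {x : ℝ} (hx : 0 ≤ x) : exp x * (2 - x) ≤ 2 + x := by
  have hderiv : ∀ y : ℝ, HasDerivAt (fun t => 2 + t - exp t * (2 - t))
      (1 - exp y * (1 - y)) y := fun y =>
    (((hasDerivAt_id' y).const_add 2).sub
      ((hasDerivAt_exp y).mul ((hasDerivAt_id' y).const_sub 2))).congr_deriv (by ring)
  have hmono := monotone_of_hasDerivAt_nonneg hderiv
    fun y => sub_nonneg.2 (exp_mul_one_sub_le_one y)
  have hψ := hmono hx
  simp only [exp_zero] at hψ
  linarith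

lemma exp_mul_one_add_sub_sub_one_neg {α c x : ℝ} (hα : 0 < α) (hc : c ≤ α + 1 / 2)
    (hx : 0 < x) : exp x * (1 + (c - α - 1) * x) - c * x - 1 < 0 := by
  have hpade := exp_mul_two_sub_le_two_add hx.le
  have hgap : 0 ≤ x * (exp x - 1) * (α + 1 / 2 - c) :=
    mul_nonneg (mul_nonneg hx.le (sub_nonneg.2 (one_le_exp hx.le))) (by linarith)
  have hαx := mul_pos hα hx
  have hsplit : exp x * (1 + (c - α - 1) * x) - c * x - 1
      = (exp x * (2 - x) - (2 + x)) / 2 - α * x - x * (exp x - 1) * (α + 1 / 2 - c) := by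
    ring
  rw [hsplit]
  linarith

lemma hasDerivAt_mul_exp_div_exp_sub_one_rpow (α c : ℝ) {x : ℝ} (hx : 0 < x) :
    HasDerivAt (fun r => r * exp (c * r) / (exp r - 1) ^ (α + 1))
      (exp (c * x) * (exp x * (1 + (c - α - 1) * x) - c * x - 1) / (exp x - 1) ^ (α + 2)) x := by
  have hu : 0 < exp x - 1 := sub_pos.2 (one_lt_exp_iff.2 hx)
  have hnum : HasDerivAt (fun r => r * exp (c * r))
      (1 * exp (c * x) + x * (exp (c * x) * (c * 1))) x :=
    (hasDerivAt_id' x).mul ((hasDerivAt_id' x).const_mul c).exp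
  have hden : HasDerivAt (fun r => (exp r - 1) ^ (α + 1))
      (exp x * (α + 1) * (exp x - 1) ^ (α + 1 - 1)) x :=
    ((hasDerivAt_exp x).sub_const 1).rpow_const (Or.inl hu.ne')
  refine (hnum.div hden (rpow_pos_of_pos hu _).ne').congr_deriv ?_
  have hp := rpow_pos_of_pos hu α
  rw [add_sub_cancel_right, rpow_add hu, rpow_add hu, rpow_one, rpow_two]
  field_simp
  ring

lemma strictAntiOn_mul_exp_div_exp_sub_one_rpow {α c : ℝ}
    (hN : ∀ r, 0 < r → exp r * (1 + (c - α - 1) * r) - c * r - 1 < 0) :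
    StrictAntiOn (fun r => r * exp (c * r) / (exp r - 1) ^ (α + 1)) (Ioi 0) := by
  have hderiv := fun x (hx : x ∈ Ioi (0 : ℝ)) => hasDerivAt_mul_exp_div_exp_sub_one_rpow α c hx
  refine strictAntiOn_of_hasDerivWithinAt_neg (convex_Ioi 0)
    (f' := fun x =>
      exp (c * x) * (exp x * (1 + (c - α - 1) * x) - c * x - 1) / (exp x - 1) ^ (α + 2))
    (fun x hx => (hderiv x hx).continuousAt.continuousWithinAt) ?_ ?_ <;> rw [interior_Ioi]
  · exact fun x hx => (hderiv x hx).hasDerivWithinAt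
  · intro x hx
    exact div_neg_of_neg_of_pos (mul_neg_of_pos_of_neg (exp_pos _) (hN x hx))
      (rpow_pos_of_pos (sub_pos.2 (one_lt_exp_iff.2 hx)) _)

end Real

theorem lamperti_stable_selfdecomposable_key
    (α c : ℝ) (hα : α ∈ Set.Ioo (0:ℝ) 2) (hc : c ≤ α + 1/2) :
    StrictAntiOn (fun r : ℝ => r * Real.exp (c * r) / (Real.exp r - 1) ^ (α + 1))
      (Set.Ioi 0) ∧
    ∀ r : ℝ, 0 < r → Real.exp r * (1 + (c - α - 1) * r) - c * r - 1 < 0 := by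
  have hN : ∀ r : ℝ, 0 < r → Real.exp r * (1 + (c - α - 1) * r) - c * r - 1 < 0 :=
    fun _ hr => Real.exp_mul_one_add_sub_sub_one_neg hα.1 hc hr
  exact ⟨Real.strictAntiOn_mul_exp_div_exp_sub_one_rpow hN, hN⟩
end

section
/- Let α ∈ (0,2) and β ∈ ℝ. Then liminf_{r → 0^+} r^{α−2} · ∫_0^r x² · e^{β x}(e^x − 1)^{−(α+1)} dx > 0; in fact there exist K > 0 and r₀ > 0 such that ∫_0^r x² e^{β x}(e^x − 1)^{−(α+1)} dx ≥ K r^{2−α} for all r ∈ (0, r₀). (By Sato's smoothness criterion, this implies that every one-dimensional Lamperti stable distribution has a C^∞ density all of whose derivatives vanish at infinity.) -/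
/-! Near `0` the Lamperti stable density behaves like the `α`-stable one: since
`x ≤ eˣ - 1 ≤ 2x` and `e^{-|β|} ≤ e^{βx} ≤ e^{|β|}` on `(0, 1]`, the integrand `x² ℓ_{α,β}(x)` is
squeezed between two constant multiples of `x^{1-α}`, whose integral over `(0, r]` is
`r^{2-α} / (2 - α)`. The upper bound is needed too: it keeps `r^{α-2} ∫₀ʳ x² ℓ_{α,β}` bounded,
without which the real `liminf` would be the junk value `0`. -/

open MeasureTheory Set Filter

namespace Real

lemma exp_sub_one_le_two_mul {x : ℝ} (h0 : 0 ≤ x) (h1 : x ≤ 1) : exp x - 1 ≤ 2 * x := by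
  have h := abs_exp_sub_one_le (x := x) (by rwa [abs_of_nonneg h0])
  rw [abs_of_nonneg h0] at h
  exact (le_abs_self _).trans h

end Real

open Real

lemma integrableOn_Ioc_zero_rpow {s r : ℝ} (hs : -1 < s) (hr : 0 ≤ r) :
    IntegrableOn (fun x : ℝ => x ^ s) (Ioc 0 r) :=
  (intervalIntegrable_iff_integrableOn_Ioc_of_le hr).1
    (intervalIntegral.intervalIntegrable_rpow' hs)

lemma setIntegral_Ioc_zero_rpow {s r : ℝ} (hs : -1 < s) (hr : 0 ≤ r) :
    ∫ x in Ioc 0 r, x ^ s = r ^ (s + 1) / (s + 1) := by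
  rw [← intervalIntegral.integral_of_le hr, integral_rpow (Or.inl hs),
    zero_rpow (by linarith), sub_zero]

lemma setIntegral_Ioc_zero_mem_Icc_of_mem_Icc_rpow {g : ℝ → ℝ} {s r a b : ℝ} (hs : -1 < s)
    (hr : 0 ≤ r) (hg : AEStronglyMeasurable g (volume.restrict (Ioc 0 r)))
    (hbounds : ∀ x ∈ Ioc 0 r, g x ∈ Icc (a * x ^ s) (b * x ^ s)) :
    ∫ x in Ioc 0 r, g x ∈ Icc (a / (s + 1) * r ^ (s + 1)) (b / (s + 1) * r ^ (s + 1)) := by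
  have hlow (x : ℝ) (hx : x ∈ Ioc 0 r) : a * x ^ s ≤ g x := (hbounds x hx).1
  have hup (x : ℝ) (hx : x ∈ Ioc 0 r) : g x ≤ b * x ^ s := (hbounds x hx).2
  have hpow := integrableOn_Ioc_zero_rpow hs hr
  have hint_low : IntegrableOn (fun x => a * x ^ s) (Ioc 0 r) := hpow.const_mul a
  have hint_up : IntegrableOn (fun x => b * x ^ s) (Ioc 0 r) := hpow.const_mul b
  have hint : IntegrableOn g (Ioc 0 r) :=
    integrable_of_le_of_le hg ((ae_restrict_iff' measurableSet_Ioc).2 (ae_of_all _ hlow))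
      ((ae_restrict_iff' measurableSet_Ioc).2 (ae_of_all _ hup)) hint_low hint_up
  have hval (c : ℝ) : ∫ x in Ioc 0 r, c * x ^ s = c / (s + 1) * r ^ (s + 1) := by
    rw [integral_const_mul, setIntegral_Ioc_zero_rpow hs hr]
    ring
  rw [← hval a, ← hval b]
  exact ⟨setIntegral_mono_on hint_low hint measurableSet_Ioc hlow,
    setIntegral_mono_on hint hint_up measurableSet_Ioc hup⟩

lemma lamperti_integrand_mem_Icc {α β x : ℝ} (hα : -1 ≤ α) (hx0 : 0 < x) (hx1 : x ≤ 1) :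
    x ^ 2 * exp (β * x) * (exp x - 1) ^ (-(α + 1)) ∈
      Icc (exp (-|β|) * 2 ^ (-(α + 1)) * x ^ (1 - α)) (exp |β| * x ^ (1 - α)) := by
  have hexp : 0 < exp x - 1 := by linarith [one_lt_exp_iff.2 hx0]
  have hp : -(α + 1) ≤ 0 := by linarith
  have hpow : x ^ (1 - α) = x ^ 2 * x ^ (-(α + 1)) := by
    rw [← rpow_natCast x 2, ← rpow_add hx0]
    congr 1
    push_cast
    ring
  have hβx : |β * x| ≤ |β| := by
    rw [abs_mul, abs_of_pos hx0]
    exact mul_le_of_le_one_right (abs_nonneg β) hx1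
  obtain ⟨hβx_lower, hβx_upper⟩ := abs_le.1 hβx
  constructor
  · calc exp (-|β|) * 2 ^ (-(α + 1)) * x ^ (1 - α)
        = x ^ 2 * exp (-|β|) * (2 * x) ^ (-(α + 1)) := by
          rw [mul_rpow zero_le_two hx0.le, hpow]
          ring
      _ ≤ x ^ 2 * exp (β * x) * (exp x - 1) ^ (-(α + 1)) := by
          gcongr x ^ 2 * ?_ * ?_
          · exact exp_le_exp.2 (by linarith)
          · exact rpow_le_rpow_of_nonpos hexp (exp_sub_one_le_two_mul hx0.le hx1) hp
  · calc x ^ 2 * exp (β * x) * (exp x - 1) ^ (-(α + 1))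
        ≤ x ^ 2 * exp |β| * x ^ (-(α + 1)) := by
          gcongr x ^ 2 * ?_ * ?_
          · exact exp_le_exp.2 hβx_upper
          · exact rpow_le_rpow_of_nonpos hx0 (by linarith [add_one_le_exp x]) hp
      _ = exp |β| * x ^ (1 - α) := by
          rw [hpow]
          ring

lemma lamperti_integral_mem_Icc {α β r : ℝ} (hα : -1 ≤ α) (hα2 : α < 2) (hr0 : 0 < r)
    (hr1 : r ≤ 1) :
    ∫ x in Ioc 0 r, x ^ 2 * exp (β * x) * (exp x - 1) ^ (-(α + 1)) ∈
      Icc (exp (-|β|) * 2 ^ (-(α + 1)) / (2 - α) * r ^ (2 - α))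
        (exp |β| / (2 - α) * r ^ (2 - α)) := by
  have h2α : 1 - α + 1 = 2 - α := by ring
  rw [← h2α]
  have hmeas : Measurable fun x : ℝ => x ^ 2 * exp (β * x) * (exp x - 1) ^ (-(α + 1)) := by
    fun_prop
  exact setIntegral_Ioc_zero_mem_Icc_of_mem_Icc_rpow (by linarith) hr0.le
    hmeas.aestronglyMeasurable fun x hx => lamperti_integrand_mem_Icc hα hx.1 (hx.2.trans hr1)

theorem lamperti_stable_smooth_density_criterion
    (α β : ℝ) (hα : α ∈ Set.Ioo (0:ℝ) 2) :
    0 < Filter.liminf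
        (fun r : ℝ => r ^ (α - 2) *
          ∫ x in Set.Ioc (0:ℝ) r, x ^ 2 * Real.exp (β * x) * (Real.exp x - 1) ^ (-(α + 1)))
        (nhdsWithin 0 (Set.Ioi 0)) ∧
    ∃ K > (0:ℝ), ∃ r₀ > (0:ℝ), ∀ r ∈ Set.Ioo (0:ℝ) r₀,
      K * r ^ (2 - α) ≤
        ∫ x in Set.Ioc (0:ℝ) r, x ^ 2 * Real.exp (β * x) * (Real.exp x - 1) ^ (-(α + 1)) := by
  obtain ⟨hα0, hα2⟩ := hα
  have bounds {r : ℝ} (hr : r ∈ Ioc 0 1) :=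
    lamperti_integral_mem_Icc (β := β) (by linarith) hα2 hr.1 hr.2
  have hK : 0 < exp (-|β|) * 2 ^ (-(α + 1)) / (2 - α) := div_pos (by positivity) (by linarith)
  refine ⟨?_, _, hK, 1, one_pos, fun r hr => (bounds (Ioo_subset_Ioc_self hr)).1⟩
  have normalize {r : ℝ} (hr : 0 < r) (c : ℝ) : r ^ (α - 2) * (c * r ^ (2 - α)) = c := by
    rw [mul_left_comm, ← rpow_add hr]
    norm_num
  have hnear : ∀ᶠ r in nhdsWithin 0 (Ioi 0), r ∈ Ioc (0 : ℝ) 1 := Ioc_mem_nhdsGT one_pos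
  refine hK.trans_le <| le_liminf_of_le
    (isCoboundedUnder_ge_of_eventually_le _ (x := exp |β| / (2 - α)) ?_) ?_
  · filter_upwards [hnear] with r hr
    rw [← normalize hr.1 (exp |β| / (2 - α))]
    exact mul_le_mul_of_nonneg_left (bounds hr).2 (rpow_pos_of_pos hr.1 _).le
  · filter_upwards [hnear] with r hr
    rw [← normalize hr.1 (exp (-|β|) * 2 ^ (-(α + 1)) / (2 - α))]
    exact mul_le_mul_of_nonneg_left (bounds hr).1 (rpow_pos_of_pos hr.1 _).le
end

section
/- Let α ∈ (0,2) and β < α + 1, and define the tail function ν̄(u) = ∫_u^∞ e^{β r}(e^r − 1)^{−(α+1)} dr for u > 0. Then for every x ∈ ℝ, lim_{u → ∞} ν̄(u − x)/ν̄(u) = e^{(α+1−β)x}. (That is, the tail of the Lévy measure of a one-dimensional Lamperti stable distribution belongs to the convolution class 𝓛^{(α+1−β)}.) -/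
/-!
The Lamperti density is asymptotic to `exp (-(α + 1 - β) * r)`, so its shift ratio
`ℓ (u - x) / ℓ u` tends to `exp ((α + 1 - β) * x)`. Both tails tend to `0` and have derivatives
`-ℓ (u - x)` and `-ℓ u`, so l'Hôpital's rule carries the limit over to the ratio of tails.
-/

open MeasureTheory Set Filter Topology Asymptotics Real

section TailIntegral

variable {f : ℝ → ℝ} {a : ℝ}

theorem hasDerivAt_integral_Ioi (hf : IntegrableOn f (Ioi a)) (hc : ContinuousOn f (Ioi a))
    {v : ℝ} (hv : a < v) : HasDerivAt (fun u => ∫ r in Ioi u, f r) (-f v) v := by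
  have hii : IntervalIntegrable f volume a v :=
    (intervalIntegrable_iff_integrableOn_Ioc_of_le hv.le).2 (hf.mono_set Ioc_subset_Ioi_self)
  have hprimitive := (intervalIntegral.integral_hasDerivAt_right hii
    (hc.stronglyMeasurableAtFilter isOpen_Ioi v hv)
    (hc.continuousAt (Ioi_mem_nhds hv))).const_sub (∫ r in Ioi a, f r)
  refine hprimitive.congr_of_eventuallyEq ?_
  filter_upwards [Ioi_mem_nhds hv] with u hu
  rw [← intervalIntegral.integral_Ioi_sub_Ioi hf hu.le, sub_sub_cancel]

theorem tendsto_integral_Ioi_sub_div_integral_Ioi (hf : IntegrableOn f (Ioi a))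
    (hc : ContinuousOn f (Ioi a)) (hne : ∀ᶠ u in atTop, f u ≠ 0) {x L : ℝ}
    (hratio : Tendsto (fun u => f (u - x) / f u) atTop (𝓝 L)) :
    Tendsto (fun u => (∫ r in Ioi (u - x), f r) / ∫ r in Ioi u, f r) atTop (𝓝 L) := by
  have hshift : Tendsto (fun u : ℝ => u - x) atTop atTop :=
    tendsto_atTop_add_const_right _ _ tendsto_id
  refine HasDerivAt.lhopital_zero_atTop (f' := fun u => -f (u - x)) (g' := fun u => -f u)
    ?_ ?_ ?_ (tendsto_integral_Ioi_zero hshift) (tendsto_integral_Ioi_zero tendsto_id) ?_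
  · filter_upwards [hshift.eventually (eventually_gt_atTop a)] with u hu
    exact (hasDerivAt_integral_Ioi hf hc hu).comp_sub_const u x
  · filter_upwards [eventually_gt_atTop a] with u hu using hasDerivAt_integral_Ioi hf hc hu
  · simpa only [ne_eq, neg_eq_zero] using hne
  · simpa only [neg_div_neg_eq] using hratio

theorem tendsto_comp_sub_div_of_isEquivalent_exp {b : ℝ}
    (hf : f ~[atTop] fun r => exp (-b * r)) (x : ℝ) :
    Tendsto (fun u => f (u - x) / f u) atTop (𝓝 (exp (b * x))) := by
  have hshift : Tendsto (fun u : ℝ => u - x) atTop atTop :=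
    tendsto_atTop_add_const_right _ _ tendsto_id
  have hexp : ((fun r => exp (-b * r)) ∘ (· - x)) / (fun r => exp (-b * r))
      = fun _ => exp (b * x) := by
    funext u
    simp only [Function.comp_apply, Pi.div_apply, ← exp_sub]
    ring_nf
  have hequiv := ((hf.comp_tendsto hshift).div hf).symm
  rw [hexp] at hequiv
  exact hequiv.tendsto_nhds tendsto_const_nhds

theorem tendsto_integral_Ioi_sub_div_integral_Ioi_of_isEquivalent_exp
    (hc : ContinuousOn f (Ioi a)) {b : ℝ} (hb : 0 < b)
    (hf : f ~[atTop] fun r => exp (-b * r)) (x : ℝ) :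
    Tendsto (fun u => (∫ r in Ioi (u - x), f r) / ∫ r in Ioi u, f r) atTop
      (𝓝 (exp (b * x))) := by
  have hc' : ContinuousOn f (Ici (a + 1)) := hc.mono (Ici_subset_Ioi.2 (lt_add_one a))
  have hint : IntegrableOn f (Ioi (a + 1)) := integrable_of_isBigO_exp_neg hb hc' hf.isBigO
  have hne : ∀ᶠ u in atTop, f u ≠ 0 :=
    (hf.eventually_pos (.of_forall fun r => exp_pos _)).mono fun _ h => h.ne'
  exact tendsto_integral_Ioi_sub_div_integral_Ioi hint (hc'.mono Ioi_subset_Ici_self) hne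
    (tendsto_comp_sub_div_of_isEquivalent_exp hf x)

end TailIntegral

section LampertiDensity

noncomputable def lampertiDensity (α β r : ℝ) : ℝ := exp (β * r) * (exp r - 1) ^ (-(α + 1))

variable (α β : ℝ)

theorem continuousOn_lampertiDensity : ContinuousOn (lampertiDensity α β) (Ioi 0) := by
  intro r hr
  have hpos : exp r - 1 ≠ 0 := (sub_pos.2 (one_lt_exp_iff.2 hr)).ne'
  unfold lampertiDensity
  fun_prop (disch := exact Or.inl hpos)

theorem lampertiDensity_eq {r : ℝ} (hr : 0 ≤ r) :
    lampertiDensity α β r = exp (-(α + 1 - β) * r) * (1 - exp (-r)) ^ (-(α + 1)) := by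
  have hsplit : exp r - 1 = exp r * (1 - exp (-r)) := by
    rw [mul_sub, ← exp_add, add_neg_cancel, exp_zero, mul_one]
  rw [lampertiDensity, hsplit,
    mul_rpow (exp_pos r).le (sub_nonneg.2 (exp_le_one_iff.2 (neg_nonpos.2 hr))),
    ← exp_mul, ← mul_assoc, ← exp_add]
  ring_nf

theorem lampertiDensity_isEquivalent :
    lampertiDensity α β ~[atTop] fun r => exp (-(α + 1 - β) * r) := by
  have hfactor : Tendsto (fun r => (1 - exp (-r)) ^ (-(α + 1))) atTop (𝓝 1) := by
    have hbase : Tendsto (fun r => 1 - exp (-r)) atTop (𝓝 (1 - 0)) :=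
      tendsto_const_nhds.sub tendsto_exp_neg_atTop_nhds_zero
    simpa using hbase.rpow_const (p := -(α + 1)) (Or.inl (by norm_num))
  refine isEquivalent_of_tendsto_one (hfactor.congr' ?_)
  filter_upwards [eventually_ge_atTop 0] with r hr
  rw [Pi.div_apply, lampertiDensity_eq α β hr, mul_div_cancel_left₀ _ (exp_pos _).ne']

end LampertiDensity

theorem lamperti_stable_tail_class_L_general
    (α β : ℝ) (hβ : β < α + 1) (x : ℝ) :
    Filter.Tendsto
      (fun u : ℝ =>
        (∫ r in Set.Ioi (u - x), Real.exp (β * r) * (Real.exp r - 1) ^ (-(α + 1))) /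
          ∫ r in Set.Ioi u, Real.exp (β * r) * (Real.exp r - 1) ^ (-(α + 1)))
      Filter.atTop (nhds (Real.exp ((α + 1 - β) * x))) :=
  tendsto_integral_Ioi_sub_div_integral_Ioi_of_isEquivalent_exp
    (continuousOn_lampertiDensity α β) (sub_pos.2 hβ) (lampertiDensity_isEquivalent α β) x

theorem lamperti_stable_tail_class_L
    (α β : ℝ) (hα : α ∈ Set.Ioo (0:ℝ) 2) (hβ : β < α + 1) (x : ℝ) :
    Filter.Tendsto
      (fun u : ℝ =>
        (∫ r in Set.Ioi (u - x), Real.exp (β * r) * (Real.exp r - 1) ^ (-(α + 1))) /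
          ∫ r in Set.Ioi u, Real.exp (β * r) * (Real.exp r - 1) ^ (-(α + 1)))
      Filter.atTop (nhds (Real.exp ((α + 1 - β) * x))) :=
  lamperti_stable_tail_class_L_general α β hβ x
end

section
/- Let α ∈ (0,2) and β < α + 1. Then lim_{x → 0^+} x^α · ∫_x^∞ e^{β r}(e^r − 1)^{−(α+1)} dr = 1/α. (This is the near-zero stable-like asymptotic of the tail of the Lamperti stable Lévy measure, used in the proofs of the creeping and regularity results.) -/
/-!
Since `e^r - 1 ~ r` as `r → 0⁺`, the density is `r^{-(α+1)} (1 + o(1))` near `0`, while at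
infinity it decays like `e^{-(α+1-β) r}`, so all its tails `∫_x^∞` are finite. Subtracting the
exact integral `∫_x^∞ r^{-(α+1)} dr = x^{-α}/α` leaves the tail of a function that is
`o(r^{-(α+1)})` at `0`, and such a tail is `o(x^{-α})`.
-/

open MeasureTheory Set Filter Asymptotics Topology Real

theorem integral_Ioi_rpow_neg_add_one {a x : ℝ} (ha : 0 < a) (hx : 0 < x) :
    ∫ r in Ioi x, r ^ (-(a + 1)) = x ^ (-a) / a := by
  rw [integral_Ioi_rpow_of_lt (by linarith) hx, show -(a + 1) + 1 = -a by ring, neg_div_neg_eq]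

theorem integral_Ioi_isLittleO_rpow_neg {g : ℝ → ℝ} {a : ℝ} (ha : 0 < a)
    (hint : ∀ x > 0, IntegrableOn g (Ioi x)) (hg : g =o[𝓝[>] 0] fun r => r ^ (-(a + 1))) :
    (fun x => ∫ r in Ioi x, g r) =o[𝓝[>] 0] fun x => x ^ (-a) := by
  refine isLittleO_iff.2 fun ε hε => ?_
  obtain ⟨y, hy, hgy⟩ :=
    mem_nhdsGT_iff_exists_Ioc_subset.1 (hg.def (c := ε * a / 2) (by positivity))
  have hpow_large : ∀ᶠ x in 𝓝[>] 0, ‖∫ r in Ioi y, g r‖ ≤ ε / 2 * x ^ (-a) :=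
    ((tendsto_rpow_neg_nhdsGT_zero (neg_lt_zero.2 ha)).const_mul_atTop
      (by positivity)).eventually_ge_atTop _
  filter_upwards [self_mem_nhdsWithin, Ioo_mem_nhdsGT hy, hpow_large] with x hx hxy hlarge
  have hx : 0 < x := hx
  have hpow_int : IntegrableOn (fun r : ℝ => r ^ (-(a + 1))) (Ioi x) :=
    integrableOn_Ioi_rpow_of_lt (by linarith) hx
  have hnear : ‖∫ r in Ioc x y, g r‖ ≤ ε / 2 * x ^ (-a) :=
    calc ‖∫ r in Ioc x y, g r‖ ≤ ∫ r in Ioc x y, ε * a / 2 * r ^ (-(a + 1)) := by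
          refine norm_integral_le_of_norm_le
            ((hpow_int.mono_set Ioc_subset_Ioi_self).const_mul _) ?_
          filter_upwards [ae_restrict_mem measurableSet_Ioc] with r hr
          have hgr := hgy ⟨hx.trans hr.1, hr.2⟩
          rwa [mem_ofPred_eq, norm_of_nonneg (rpow_nonneg (hx.trans hr.1).le _)] at hgr
      _ ≤ ∫ r in Ioi x, ε * a / 2 * r ^ (-(a + 1)) := by
          refine setIntegral_mono_set (hpow_int.const_mul _) ?_ Ioc_subset_Ioi_self.eventuallyLE
          filter_upwards [ae_restrict_mem measurableSet_Ioi] with r hr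
          exact mul_nonneg (by positivity) (rpow_nonneg (hx.trans hr).le _)
      _ = ε / 2 * x ^ (-a) := by
          rw [integral_const_mul, integral_Ioi_rpow_neg_add_one ha hx]
          field_simp
  have hsplit : ∫ r in Ioi x, g r = (∫ r in Ioc x y, g r) + ∫ r in Ioi y, g r := by
    rw [← setIntegral_union (Ioc_disjoint_Ioi le_rfl) measurableSet_Ioi
      ((hint x hx).mono_set Ioc_subset_Ioi_self) (hint y hy), Ioc_union_Ioi_eq_Ioi hxy.2.le]
  rw [hsplit, norm_of_nonneg (rpow_nonneg hx.le _)]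
  calc _ ≤ ‖∫ r in Ioc x y, g r‖ + ‖∫ r in Ioi y, g r‖ := norm_add_le _ _
    _ ≤ ε / 2 * x ^ (-a) + ε / 2 * x ^ (-a) := add_le_add hnear hlarge
    _ = ε * x ^ (-a) := by ring

theorem tendsto_rpow_mul_integral_Ioi_of_tendsto_mul_rpow {f : ℝ → ℝ} {a c : ℝ} (ha : 0 < a)
    (hint : ∀ x > 0, IntegrableOn f (Ioi x))
    (hf : Tendsto (fun r => f r * r ^ (a + 1)) (𝓝[>] 0) (𝓝 c)) :
    Tendsto (fun x => x ^ a * ∫ r in Ioi x, f r) (𝓝[>] 0) (𝓝 (c / a)) := by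
  have hpow_int : ∀ x > 0, IntegrableOn (fun r : ℝ => c * r ^ (-(a + 1))) (Ioi x) :=
    fun x hx => (integrableOn_Ioi_rpow_of_lt (by linarith) hx).const_mul c
  have hrem : (fun r => f r - c * r ^ (-(a + 1))) =o[𝓝[>] 0] fun r => r ^ (-(a + 1)) := by
    have h := ((isLittleO_one_iff ℝ).2 (tendsto_sub_nhds_zero_iff.2 hf)).mul_isBigO
      (isBigO_refl (fun r : ℝ => r ^ (-(a + 1))) (𝓝[>] 0))
    refine h.congr' ?_ (by simp)
    filter_upwards [self_mem_nhdsWithin] with r (hr : 0 < r)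
    rw [rpow_neg hr.le]
    field_simp
  have hremInt : Tendsto (fun x => (∫ r in Ioi x, (f r - c * r ^ (-(a + 1)))) / x ^ (-a))
      (𝓝[>] 0) (𝓝 0) :=
    (integral_Ioi_isLittleO_rpow_neg ha (fun x hx => (hint x hx).sub (hpow_int x hx))
      hrem).tendsto_div_nhds_zero
  rw [← add_zero (c / a)]
  refine (hremInt.const_add (c / a)).congr' ?_
  filter_upwards [self_mem_nhdsWithin] with x (hx : 0 < x)
  rw [integral_sub (hint x hx) (hpow_int x hx), integral_const_mul,
    integral_Ioi_rpow_neg_add_one ha hx, rpow_neg hx.le]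
  have : x ^ a ≠ 0 := (rpow_pos_of_pos hx a).ne'
  field_simp
  ring

noncomputable def lampertiStableDensity (α β r : ℝ) : ℝ :=
  exp (β * r) * (exp r - 1) ^ (-(α + 1))

theorem lampertiStableDensity_eq_exp_mul {α β r : ℝ} (hr : 0 < r) :
    lampertiStableDensity α β r = exp (-(α + 1 - β) * r) * (1 - exp (-r)) ^ (-(α + 1)) := by
  have h : exp r - 1 = exp r * (1 - exp (-r)) := by
    rw [mul_sub, mul_one, ← exp_add, add_neg_cancel, exp_zero]
  rw [lampertiStableDensity, h,
    mul_rpow (exp_pos r).le (sub_nonneg.2 (exp_le_one_iff.2 (neg_nonpos.2 hr.le))), ← exp_mul,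
    ← mul_assoc, ← exp_add]
  ring_nf

theorem continuousOn_lampertiStableDensity (α β : ℝ) :
    ContinuousOn (lampertiStableDensity α β) (Ioi 0) := by
  refine (continuous_exp.comp (continuous_const_mul β)).continuousOn.mul
    (ContinuousOn.rpow_const (by fun_prop) fun r (hr : 0 < r) => Or.inl ?_)
  simpa [sub_eq_zero] using hr.ne'

theorem integrableOn_lampertiStableDensity_Ioi {α β x : ℝ} (hβ : β < α + 1) (hx : 0 < x) :
    IntegrableOn (lampertiStableDensity α β) (Ioi x) := by
  refine integrable_of_isBigO_exp_neg (sub_pos.2 hβ)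
    ((continuousOn_lampertiStableDensity α β).mono (Ici_subset_Ioi.2 hx)) ?_
  have hfactor : Tendsto (fun r => (1 - exp (-r)) ^ (-(α + 1))) atTop (𝓝 1) := by
    have h := (tendsto_const_nhds.sub tendsto_exp_neg_atTop_nhds_zero).rpow_const
      (p := -(α + 1)) (Or.inl (by norm_num : (1 : ℝ) - 0 ≠ 0))
    simpa using h
  refine (((isBigO_refl (fun r => exp (-(α + 1 - β) * r)) atTop).mul
    (hfactor.isBigO_one ℝ)).congr' ?_ (by simp))
  filter_upwards [eventually_gt_atTop 0] with r hr
  exact (lampertiStableDensity_eq_exp_mul hr).symm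

theorem tendsto_lampertiStableDensity_mul_rpow (α β : ℝ) :
    Tendsto (fun r => lampertiStableDensity α β r * r ^ (α + 1)) (𝓝[>] 0) (𝓝 1) := by
  have hslope : Tendsto (fun r => r⁻¹ * (exp r - 1)) (𝓝[>] 0) (𝓝 1) := by
    simpa using (hasDerivAt_exp 0).tendsto_slope_zero_right
  have hexp : Tendsto (fun r => exp (β * r)) (𝓝[>] 0) (𝓝 1) := by
    simpa using ((by fun_prop : Continuous fun r => exp (β * r)).tendsto 0).mono_left
      nhdsWithin_le_nhds
  have h := hexp.mul (hslope.rpow_const (Or.inl one_ne_zero) (p := -(α + 1)))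
  rw [one_rpow, mul_one] at h
  refine h.congr' ?_
  filter_upwards [self_mem_nhdsWithin] with r (hr : 0 < r)
  rw [lampertiStableDensity, mul_rpow (inv_pos.2 hr).le (sub_nonneg.2 (one_le_exp hr.le)),
    inv_rpow hr.le, rpow_neg hr.le, inv_inv, mul_assoc, mul_comm (r ^ _)]

theorem lamperti_stable_tail_asymptotic_at_zero
    (α β : ℝ) (hα : α ∈ Set.Ioo (0:ℝ) 2) (hβ : β < α + 1) :
    Filter.Tendsto
      (fun x : ℝ => x ^ α * ∫ r in Set.Ioi x, Real.exp (β * r) * (Real.exp r - 1) ^ (-(α + 1)))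
      (nhdsWithin 0 (Set.Ioi 0)) (nhds (1 / α)) :=
  tendsto_rpow_mul_integral_Ioi_of_tendsto_mul_rpow hα.1
    (fun _ hx => integrableOn_lampertiStableDensity_Ioi hβ hx)
    (tendsto_lampertiStableDensity_mul_rpow α β)
end

section
/- Let α ∈ (0,1), β < α + 1, and λ ∈ ℝ. Then ∫_0^∞ (e^{iλx} − 1) · e^{β x}(e^x − 1)^{−(α+1)} dx = Γ(−α) · ( Γ(−iλ + α + 1 − β)/Γ(−iλ + 1 − β) − Γ(α + 1 − β)/Γ(1 − β) ), where Γ is the complex Gamma function (with the convention 1/Γ = 0 at the poles of Γ, i.e. Γ vanishes at nonpositive integers). In particular the characteristic exponent of a Lamperti stable process of index α ∈ (0,1) is explicit in terms of Pochhammer ratios (z)_α = Γ(z+α)/Γ(z). -/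
open MeasureTheory Set Filter Topology

/-!
Write `K_s(u, x) = e^{ux} (e^x - 1)^{-s}`. The substitution `v = 1 - e^{-x}` turns
`∫₀^∞ K_s(u, x) dx` into the Beta integral `B(1 - s, s - u)` when `s < 1` and `re u < s`.
The integrand is `K_{α+1}(iλ + β, x) - K_{α+1}(β, x)`, whose exponent `α + 1` is too large for
this; but `∂ₓ K_s(u, x) = u K_s(u, x) - s K_{s+1}(u + 1, x)`, so integrating by parts against
`K_α(u - 1, x)` reduces it to two Beta integrals. The boundary terms vanish: at `0` because
`e^{zx} - e^{wx} = O(x)` and `α < 1`, at `∞` because the function and its derivative are both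
integrable. The recurrence `1/Γ(v) = v/Γ(v + 1)`, true also at `v = 0`, then yields the
Pochhammer ratios.
-/

namespace LampertiStable

noncomputable def kernel (s : ℝ) (u : ℂ) (x : ℝ) : ℂ :=
  Complex.exp (u * x) * ((Real.exp x - 1) ^ (-s) : ℝ)

lemma strictMono_one_sub_exp_neg : StrictMono fun x : ℝ => 1 - Real.exp (-x) :=
  fun _ _ h => by simpa using h

lemma image_one_sub_exp_neg_Ioi : (fun x : ℝ => 1 - Real.exp (-x)) '' Ioi 0 = Ioo 0 1 := by
  ext u
  simp only [mem_image, mem_Ioi, mem_Ioo]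
  constructor
  · rintro ⟨x, hx, rfl⟩
    have : Real.exp (-x) < 1 := Real.exp_lt_one_iff.mpr (neg_lt_zero.mpr hx)
    exact ⟨by linarith, by linarith [Real.exp_pos (-x)]⟩
  · rintro ⟨h0, h1⟩
    refine ⟨-Real.log (1 - u), neg_pos.mpr (Real.log_neg (by linarith) (by linarith)), ?_⟩
    rw [neg_neg, Real.exp_log (by linarith), sub_sub_cancel]

lemma hasDerivWithinAt_one_sub_exp_neg (s : Set ℝ) (x : ℝ) :
    HasDerivWithinAt (fun x : ℝ => 1 - Real.exp (-x)) (Real.exp (-x)) s x := by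
  simpa using (((hasDerivAt_neg x).exp).const_sub 1).hasDerivWithinAt

/-- Under `v = 1 - e^{-x}` the kernel becomes the integrand of
`Complex.betaIntegral (1 - s) (s - u)`. -/
lemma kernel_eq_exp_neg_smul_betaIntegrand (s : ℝ) (u : ℂ) {x : ℝ} (hx : 0 < x) :
    kernel s u x = |Real.exp (-x)| •
      (((1 - Real.exp (-x) : ℝ) : ℂ) ^ ((1 - s : ℂ) - 1) *
        (1 - ((1 - Real.exp (-x) : ℝ) : ℂ)) ^ ((s - u : ℂ) - 1)) := by
  set v := 1 - Real.exp (-x)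
  have hv : 0 < v := by simp only [v, sub_pos, Real.exp_lt_one_iff, neg_lt_zero, hx]
  have hpow_v : (v : ℂ) ^ ((1 - s : ℂ) - 1) = ((v ^ (-s) : ℝ) : ℂ) := by
    rw [Complex.ofReal_cpow hv.le]
    push_cast
    ring_nf
  have hpow_exp :
      (1 - (v : ℂ)) ^ ((s - u : ℂ) - 1) = Complex.exp (-x * ((s - u : ℂ) - 1)) := by
    rw [show 1 - (v : ℂ) = Complex.exp (-x) by simp [v, Complex.ofReal_exp],
      Complex.cpow_def_of_ne_zero (Complex.exp_ne_zero _),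
      Complex.log_exp (by simp [Real.pi_pos]) (by simp [Real.pi_pos.le])]
  have hrpow : (Real.exp x - 1) ^ (-s) = Real.exp (-s * x) * v ^ (-s) := by
    rw [show Real.exp x - 1 = Real.exp x * v by simp [v, mul_sub, ← Real.exp_add],
      Real.mul_rpow (Real.exp_pos x).le hv.le, ← Real.exp_mul, mul_comm x]
  rw [kernel, abs_of_pos (Real.exp_pos _), Complex.real_smul, hpow_v, hpow_exp, hrpow]
  push_cast [Complex.ofReal_exp]
  rw [← mul_assoc, ← Complex.exp_add, mul_left_comm, ← Complex.exp_add, mul_comm]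
  ring_nf

lemma integrableOn_kernel {s : ℝ} {u : ℂ} (hs : s < 1) (hu : u.re < s) :
    IntegrableOn (kernel s u) (Ioi 0) := by
  have hbeta := (Complex.betaIntegral_convergent (u := 1 - s) (v := s - u)
    (by simpa using hs) (by simpa using hu)).1.mono_set Ioo_subset_Ioc_self
  rw [← image_one_sub_exp_neg_Ioi, integrableOn_image_iff_integrableOn_abs_deriv_smul
    measurableSet_Ioi (fun x _ => hasDerivWithinAt_one_sub_exp_neg _ x)
    strictMono_one_sub_exp_neg.injective.injOn] at hbeta
  exact hbeta.congr_fun (fun x hx => (kernel_eq_exp_neg_smul_betaIntegrand s u hx).symm)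
    measurableSet_Ioi

lemma integral_kernel {s : ℝ} {u : ℂ} (hs : s < 1) (hu : u.re < s) :
    ∫ x in Ioi 0, kernel s u x =
      Complex.Gamma (1 - s) * Complex.Gamma (s - u) / Complex.Gamma (1 - u) := by
  have hΓ : Complex.Gamma (1 - u) ≠ 0 :=
    Complex.Gamma_ne_zero_of_re_pos (by rw [Complex.sub_re, Complex.one_re]; linarith)
  rw [eq_div_iff hΓ, setIntegral_congr_fun measurableSet_Ioi
      (fun x hx => kernel_eq_exp_neg_smul_betaIntegrand s u hx),
    ← integral_image_eq_integral_abs_deriv_smul measurableSet_Ioi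
      (fun x _ => hasDerivWithinAt_one_sub_exp_neg _ x) strictMono_one_sub_exp_neg.injective.injOn
      (fun v : ℝ => (v : ℂ) ^ ((1 - s : ℂ) - 1) * (1 - (v : ℂ)) ^ ((s - u : ℂ) - 1)),
    image_one_sub_exp_neg_Ioi, ← integral_Ioc_eq_integral_Ioo,
    ← intervalIntegral.integral_of_le zero_le_one, ← Complex.betaIntegral,
    Complex.Gamma_mul_Gamma_eq_betaIntegral (by simpa using hs) (by simpa using hu)]
  ring_nf

lemma hasDerivAt_kernel (s : ℝ) (u : ℂ) {x : ℝ} (hx : 0 < x) :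
    HasDerivAt (kernel s u) (u * kernel s u x - s * kernel (s + 1) (u + 1) x) x := by
  have hexp : HasDerivAt (fun y : ℝ => Complex.exp (u * y)) (Complex.exp (u * x) * (u * 1)) x :=
    ((hasDerivAt_id x).ofReal_comp.const_mul u).cexp
  have hrpow : HasDerivAt (fun y => (Real.exp y - 1) ^ (-s))
      (Real.exp x * (-s) * (Real.exp x - 1) ^ (-s - 1)) x :=
    ((Real.hasDerivAt_exp x).sub_const 1).rpow_const
      (Or.inl (sub_pos.mpr (Real.one_lt_exp_iff.mpr hx)).ne')
  refine (hexp.mul hrpow.ofReal_comp).congr_deriv ?_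
  have hshift : Complex.exp ((u + 1) * x) = Complex.exp (u * x) * (Real.exp x : ℂ) := by
    rw [Complex.ofReal_exp, ← Complex.exp_add]; ring_nf
  rw [kernel, kernel, hshift, show -(s + 1) = -s - 1 by ring]
  push_cast
  ring

lemma continuousOn_kernel (s : ℝ) (u : ℂ) : ContinuousOn (kernel s u) (Ioi 0) :=
  fun _ hx => (hasDerivAt_kernel s u hx).continuousAt.continuousWithinAt

lemma kernel_add_one (s : ℝ) (u : ℂ) {x : ℝ} (hx : 0 < x) :
    kernel (s + 1) (u + 1) x = ((Real.exp x / (Real.exp x - 1) : ℝ) : ℂ) * kernel s u x := by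
  rw [kernel, kernel, show -(s + 1) = -s + -1 by ring,
    Real.rpow_add (sub_pos.mpr (Real.one_lt_exp_iff.mpr hx)), Real.rpow_neg_one,
    add_mul, one_mul, Complex.exp_add, ← Complex.ofReal_exp]
  push_cast
  ring

lemma rpow_neg_exp_sub_one_le {s x : ℝ} (hs : 0 ≤ s) (hx : 0 < x) :
    (Real.exp x - 1) ^ (-s) ≤ x ^ (-s) :=
  Real.rpow_le_rpow_of_nonpos hx (by linarith [Real.add_one_le_exp x]) (neg_nonpos.mpr hs)

lemma norm_cexp_mul_sub_cexp_mul_le (z w : ℂ) {x : ℝ} (hx : x ∈ Icc (0 : ℝ) 1) :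
    ‖Complex.exp (z * x) - Complex.exp (w * x)‖ ≤
      ‖z - w‖ * Real.exp (|w.re| + ‖z - w‖) * x := by
  obtain ⟨hx0, hx1⟩ := hx
  have hdiff : Complex.exp (z * x) - Complex.exp (w * x) =
      Complex.exp (w * x) * (Complex.exp ((z - w) * x) - 1) := by
    rw [mul_sub, ← Complex.exp_add]; ring_nf
  have hnorm : ‖((z - w) * x : ℂ)‖ = ‖z - w‖ * x := by
    rw [norm_mul, Complex.norm_real, Real.norm_of_nonneg hx0]
  have hfirst : ‖Complex.exp (w * x)‖ ≤ Real.exp |w.re| := by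
    rw [Complex.norm_exp]
    simp only [Complex.mul_re, Complex.ofReal_re, Complex.ofReal_im, mul_zero, sub_zero]
    exact Real.exp_le_exp.mpr (by nlinarith [le_abs_self w.re, abs_nonneg w.re])
  have hsecond :
      ‖Complex.exp ((z - w) * x) - 1‖ ≤ ‖z - w‖ * x * Real.exp ‖z - w‖ := by
    have := Complex.norm_exp_sub_sum_le_norm_mul_exp ((z - w) * x) 1
    simp only [Finset.range_one, Finset.sum_singleton, pow_zero, Nat.factorial_zero,
      Nat.cast_one, div_one, pow_one, hnorm] at this
    refine this.trans (mul_le_mul_of_nonneg_left (Real.exp_le_exp.mpr ?_) (by positivity))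
    nlinarith [norm_nonneg (z - w)]
  rw [hdiff, norm_mul, Real.exp_add]
  calc ‖Complex.exp (w * x)‖ * ‖Complex.exp ((z - w) * x) - 1‖
      ≤ Real.exp |w.re| * (‖z - w‖ * x * Real.exp ‖z - w‖) :=
        mul_le_mul hfirst hsecond (norm_nonneg _) (Real.exp_pos _).le
    _ = _ := by ring

lemma norm_kernel_sub_kernel_le {s : ℝ} (hs : 0 ≤ s) (z w : ℂ) {x : ℝ}
    (hx : x ∈ Ioc (0 : ℝ) 1) :
    ‖kernel s z x - kernel s w x‖ ≤
      ‖z - w‖ * Real.exp (|w.re| + ‖z - w‖) * x ^ (1 - s) := by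
  obtain ⟨hx0, hx1⟩ := hx
  have hr : 0 ≤ (Real.exp x - 1) ^ (-s) :=
    Real.rpow_nonneg (sub_nonneg.mpr (Real.one_le_exp hx0.le)) _
  rw [kernel, kernel, ← sub_mul, norm_mul, Complex.norm_real, Real.norm_of_nonneg hr,
    sub_eq_add_neg (1 : ℝ), Real.rpow_add hx0, Real.rpow_one, ← mul_assoc]
  exact mul_le_mul (norm_cexp_mul_sub_cexp_mul_le z w ⟨hx0.le, hx1⟩)
    (rpow_neg_exp_sub_one_le hs hx0) hr (by positivity)

lemma tendsto_kernel_sub_kernel_nhdsGT_zero {s : ℝ} (hs0 : 0 ≤ s) (hs1 : s < 1) (z w : ℂ) :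
    Tendsto (fun x => kernel s z x - kernel s w x) (𝓝[>] 0) (𝓝 0) := by
  have hpow : Tendsto (fun x : ℝ => x ^ (1 - s)) (𝓝[>] 0) (𝓝 0) := by
    simpa [Real.zero_rpow (sub_pos.mpr hs1).ne'] using
      (Real.continuousAt_rpow_const 0 (1 - s) (Or.inr (sub_pos.mpr hs1).le)).tendsto.mono_left
        nhdsWithin_le_nhds
  refine squeeze_zero_norm' ?_
    (by simpa using hpow.const_mul (‖z - w‖ * Real.exp (|w.re| + ‖z - w‖)))
  filter_upwards [Ioc_mem_nhdsGT zero_lt_one] with x hx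
  exact norm_kernel_sub_kernel_le hs0 z w hx

lemma integrableOn_kernel_sub_kernel_Ioc {s : ℝ} (hs0 : 0 ≤ s) (hs2 : s < 2) (z w : ℂ) :
    IntegrableOn (fun x => kernel s z x - kernel s w x) (Ioc 0 1) := by
  refine Integrable.mono'
    (g := fun x => ‖z - w‖ * Real.exp (|w.re| + ‖z - w‖) * x ^ (1 - s))
    (((intervalIntegral.intervalIntegrable_rpow' (by linarith)).1).const_mul _) ?_ ?_
  · exact (((continuousOn_kernel s z).sub (continuousOn_kernel s w)).mono
      Ioc_subset_Ioi_self).aestronglyMeasurable measurableSet_Ioc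
  · filter_upwards [ae_restrict_mem measurableSet_Ioc] with x hx
    exact norm_kernel_sub_kernel_le hs0 z w hx

lemma integrableOn_kernel_add_one_Ioi_one {s : ℝ} {u : ℂ} (hs : s < 1) (hu : u.re < s) :
    IntegrableOn (kernel (s + 1) (u + 1)) (Ioi 1) := by
  have hbound :
      ∀ x ∈ Ioi (1 : ℝ), ‖((Real.exp x / (Real.exp x - 1) : ℝ) : ℂ)‖ ≤ 2 := by
    intro x hx
    have h2 : 2 ≤ Real.exp x := by linarith [Real.add_one_le_exp x, mem_Ioi.mp hx]
    rw [Complex.norm_real, Real.norm_of_nonneg (div_nonneg (Real.exp_pos x).le (by linarith)),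
      div_le_iff₀ (by linarith)]
    linarith
  have hmeas : AEStronglyMeasurable (fun x => ((Real.exp x / (Real.exp x - 1) : ℝ) : ℂ))
      (volume.restrict (Ioi 1)) :=
    (Complex.continuous_ofReal.comp_continuousOn ((Real.continuous_exp.continuousOn).div
      (by fun_prop) fun x hx => (sub_pos.mpr (Real.one_lt_exp_iff.mpr
        (zero_lt_one.trans hx))).ne')).aestronglyMeasurable measurableSet_Ioi
  have hprod : IntegrableOn (fun x => ((Real.exp x / (Real.exp x - 1) : ℝ) : ℂ) * kernel s u x)
      (Ioi 1) :=
    ((integrableOn_kernel hs hu).mono_set (Ioi_subset_Ioi zero_le_one)).bdd_mul hmeas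
      (ae_restrict_of_forall_mem measurableSet_Ioi hbound)
  exact hprod.congr_fun (fun x hx => (kernel_add_one s u (zero_lt_one.trans hx)).symm)
    measurableSet_Ioi

lemma integrableOn_kernel_sub_kernel {s : ℝ} (hs0 : 0 ≤ s) (hs1 : s < 1) {z w : ℂ}
    (hz : z.re < s + 1) (hw : w.re < s + 1) :
    IntegrableOn (fun x => kernel (s + 1) z x - kernel (s + 1) w x) (Ioi 0) := by
  have hIoi (u : ℂ) (hu : u.re < s + 1) : IntegrableOn (kernel (s + 1) u) (Ioi 1) := by
    simpa using integrableOn_kernel_add_one_Ioi_one hs1 (u := u - 1)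
      (by rw [Complex.sub_re, Complex.one_re]; linarith)
  rw [← Ioc_union_Ioi_eq_Ioi zero_le_one]
  exact (integrableOn_kernel_sub_kernel_Ioc (by linarith) (by linarith) z w).union
    ((hIoi z hz).sub (hIoi w hw))

lemma sub_one_mul_Gamma_ratio {s : ℂ} (hs : s ≠ 0) (z : ℂ) :
    (z - 1) * (Complex.Gamma (1 - s) * Complex.Gamma (s - (z - 1)) / Complex.Gamma (1 - (z - 1)))
      = s * (Complex.Gamma (-s) * (Complex.Gamma (s + 1 - z) / Complex.Gamma (1 - z))) := by
  rw [show 1 - s = -s + 1 by ring, Complex.Gamma_add_one _ (neg_ne_zero.mpr hs),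
    show s - (z - 1) = s + 1 - z by ring, show 1 - (z - 1) = (1 - z) + 1 by ring,
    div_eq_mul_inv, div_eq_mul_inv,
    Complex.one_div_Gamma_eq_self_mul_one_div_Gamma_add_one (1 - z)]
  ring

theorem integral_kernel_sub_kernel {s : ℝ} (hs0 : 0 < s) (hs1 : s < 1) {z w : ℂ}
    (hz : z.re < s + 1) (hw : w.re < s + 1) :
    ∫ x in Ioi 0, (kernel (s + 1) z x - kernel (s + 1) w x) =
      Complex.Gamma (-s) * (Complex.Gamma (s + 1 - z) / Complex.Gamma (1 - z)
        - Complex.Gamma (s + 1 - w) / Complex.Gamma (1 - w)) := by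
  have hz' : (z - 1).re < s := by rw [Complex.sub_re, Complex.one_re]; linarith
  have hw' : (w - 1).re < s := by rw [Complex.sub_re, Complex.one_re]; linarith
  have hderiv : ∀ x ∈ Ioi (0 : ℝ), HasDerivAt (kernel s (z - 1) - kernel s (w - 1))
      ((z - 1) * kernel s (z - 1) x - (w - 1) * kernel s (w - 1) x
        - s * (kernel (s + 1) z x - kernel (s + 1) w x)) x := fun x hx =>
    ((hasDerivAt_kernel s (z - 1) hx).sub (hasDerivAt_kernel s (w - 1) hx)).congr_deriv
      (by rw [sub_add_cancel, sub_add_cancel]; ring)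
  have hKz := integrableOn_kernel hs1 hz'
  have hKw := integrableOn_kernel hs1 hw'
  have hIint := integrableOn_kernel_sub_kernel hs0.le hs1 hz hw
  have hF'int := ((hKz.const_mul (z - 1)).sub (hKw.const_mul (w - 1))).sub
    (hIint.const_mul (s : ℂ))
  have hF0 : (kernel s (z - 1) - kernel s (w - 1)) 0 = 0 := by simp [kernel]
  have hcont : ContinuousWithinAt (kernel s (z - 1) - kernel s (w - 1)) (Ici 0) 0 := by
    rw [← continuousWithinAt_Ioi_iff_Ici, ContinuousWithinAt, hF0]
    exact tendsto_kernel_sub_kernel_nhdsGT_zero hs0.le hs1 (z - 1) (w - 1)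
  have hibp := integral_Ioi_of_hasDerivAt_of_tendsto hcont hderiv hF'int
    (tendsto_zero_of_hasDerivAt_of_integrableOn_Ioi hderiv hF'int (hKz.sub hKw))
  have hsC : (s : ℂ) ≠ 0 := Complex.ofReal_ne_zero.mpr hs0.ne'
  rw [integral_sub (f := fun x => (z - 1) * kernel s (z - 1) x - (w - 1) * kernel s (w - 1) x)
      ((hKz.const_mul _).sub (hKw.const_mul _)) (hIint.const_mul _),
    integral_sub (hKz.const_mul _) (hKw.const_mul _),
    integral_const_mul, integral_const_mul, integral_const_mul,
    integral_kernel hs1 hz', integral_kernel hs1 hw',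
    sub_one_mul_Gamma_ratio hsC, sub_one_mul_Gamma_ratio hsC, hF0] at hibp
  apply mul_left_cancel₀ hsC
  linear_combination -hibp

end LampertiStable

theorem lamperti_stable_characteristic_exponent_small_index
    (α β l : ℝ) (hα : α ∈ Set.Ioo (0:ℝ) 1) (hβ : β < α + 1) :
    ∫ x in Set.Ioi (0:ℝ),
        (Complex.exp (Complex.I * l * x) - 1) *
          ((Real.exp (β * x) * (Real.exp x - 1) ^ (-(α + 1)) : ℝ) : ℂ)
      = Complex.Gamma (-α) *
          (Complex.Gamma (-(Complex.I * l) + α + 1 - β) /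
              Complex.Gamma (-(Complex.I * l) + 1 - β)
            - Complex.Gamma (α + 1 - β) / Complex.Gamma (1 - β)) := by
  have hintegrand : ∀ x : ℝ, (Complex.exp (Complex.I * l * x) - 1) *
      ((Real.exp (β * x) * (Real.exp x - 1) ^ (-(α + 1)) : ℝ) : ℂ)
        = LampertiStable.kernel (α + 1) (Complex.I * l + β) x
          - LampertiStable.kernel (α + 1) β x := by
    intro x
    rw [LampertiStable.kernel, LampertiStable.kernel, add_mul, Complex.exp_add]
    push_cast
    ring
  simp_rw [hintegrand]
  rw [LampertiStable.integral_kernel_sub_kernel hα.1 hα.2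
    (by simpa using hβ) (by simpa using hβ)]
  ring_nf
end

section
/- Let α ∈ (0,1), β < α + 1, and λ ≥ 0. Then ∫_0^∞ (1 − e^{−λ x}) · e^{β x}(e^x − 1)^{−(α+1)} dx = −Γ(−α)·( Γ(λ + 1 − β + α)/Γ(λ + 1 − β) − Γ(1 − β + α)/Γ(1 − β) ), where Γ is the real Gamma function (taking the value 0 at nonpositive integers, so that ratios at poles are interpreted as 0). That is, the Laplace exponent of a driftless Lamperti stable subordinator is Φ_L(λ) = −c₊Γ(−α)((λ+1−β)_α − (1−β)_α) with (z)_α = Γ(z+α)/Γ(z). -/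
/-!
Substituting `t = exp (-x)` turns the integral into
`J = ∫₀¹ t ^ (c - 1) * (1 - t ^ l) * (1 - t) ^ (-α - 1) dt` with `c = 1 - β + α > 0`.
The factor `(1 - t) ^ (-α - 1)` is not integrable at `1`, so `J` cannot be split into two Beta
integrals; instead, integrating `(t ^ c - t ^ (c + l)) * (1 - t) ^ (-α)` by parts, which vanishes
at both ends, gives `α J = (c + l - α) B(c + l, 1 - α) - (c - α) B(c, 1 - α)`.
Then `(p - α) B(p, 1 - α) = Γ(p) Γ(1 - α) / Γ(p - α)` and `Γ(1 - α) = -α Γ(-α)`.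
-/

open MeasureTheory Set Real Filter Topology

lemma ofReal_cpow_mul_one_sub_cpow {t : ℝ} (ht : t ∈ Ioo (0:ℝ) 1) (p q : ℝ) :
    (t : ℂ) ^ (p : ℂ) * ((1 - t : ℝ) : ℂ) ^ (q : ℂ) = ((t ^ p * (1 - t) ^ q : ℝ) : ℂ) := by
  rw [Complex.ofReal_mul, Complex.ofReal_cpow ht.1.le,
    Complex.ofReal_cpow (sub_nonneg.mpr ht.2.le)]

lemma integrableOn_rpow_mul_one_sub_rpow {p q : ℝ} (hp : 0 < p) (hq : 0 < q) :
    IntegrableOn (fun t : ℝ => t ^ (p - 1) * (1 - t) ^ (q - 1)) (Ioo 0 1) := by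
  have h := Complex.betaIntegral_convergent (u := p) (v := q) (by simpa) (by simpa)
  rw [intervalIntegrable_iff_integrableOn_Ioc_of_le zero_le_one] at h
  refine IntegrableOn.congr_fun (h.mono_set Ioo_subset_Ioc_self).re (fun t ht => ?_)
    measurableSet_Ioo
  simp only [← Complex.ofReal_one, ← Complex.ofReal_sub]
  rw [ofReal_cpow_mul_one_sub_cpow ht, RCLike.re_to_complex, Complex.ofReal_re]

lemma integral_rpow_mul_one_sub_rpow {p q : ℝ} (hp : 0 < p) (hq : 0 < q) :
    ∫ t in Ioo 0 1, t ^ (p - 1) * (1 - t) ^ (q - 1) = Gamma p * Gamma q / Gamma (p + q) := by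
  have h := Complex.betaIntegral_eq_Gamma_mul_div (u := p) (v := q) (by simpa) (by simpa)
  rw [Complex.betaIntegral, intervalIntegral.integral_of_le zero_le_one,
    integral_Ioc_eq_integral_Ioo, ← Complex.ofReal_add, Complex.Gamma_ofReal,
    Complex.Gamma_ofReal, Complex.Gamma_ofReal,
    setIntegral_congr_fun measurableSet_Ioo (fun t ht => by
      simp only [← Complex.ofReal_one, ← Complex.ofReal_sub]
      exact ofReal_cpow_mul_one_sub_cpow ht _ _), integral_complex_ofReal] at h
  exact_mod_cast h

-- At `x = 0` both sides vanish because `Gamma 0 = 0`.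
lemma mul_div_Gamma_add_one (x C : ℝ) : x * (C / Gamma (x + 1)) = C / Gamma x := by
  rcases eq_or_ne x 0 with rfl | hx
  · simp
  · rw [Gamma_add_one hx, ← mul_div_assoc, mul_div_mul_left _ _ hx]

lemma one_sub_rpow_le_max_mul_one_sub {l t : ℝ} (ht : 0 < t) (ht1 : t ≤ 1) :
    1 - t ^ l ≤ max l 1 * (1 - t) := by
  rcases le_total l 1 with h | h
  · have : t ≤ t ^ l := by simpa using rpow_le_rpow_of_exponent_ge ht ht1 h
    nlinarith [le_max_right l 1]
  · have := one_add_mul_self_le_rpow_one_add (s := t - 1) (by linarith) h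
    rw [add_sub_cancel] at this
    nlinarith [le_max_left l 1]

lemma integral_comp_exp_neg_Ioi {E : Type*} [NormedAddCommGroup E] [NormedSpace ℝ E]
    (g : ℝ → E) : ∫ x in Ioi 0, exp (-x) • g (exp (-x)) = ∫ t in Ioo 0 1, g t := by
  have himage : (fun x => exp (-x)) '' Ioi 0 = Ioo 0 1 := by
    ext t
    constructor
    · rintro ⟨x, hx, rfl⟩
      exact ⟨exp_pos _, exp_lt_one_iff.mpr (neg_neg_of_pos hx)⟩
    · rintro ⟨ht0, ht1⟩
      exact ⟨-log t, neg_pos.mpr (log_neg ht0 ht1), by simp [exp_log ht0]⟩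
  rw [← himage, ← Function.comp_def, integral_image_eq_integral_abs_deriv_smul measurableSet_Ioi
    (fun x _ => ((hasDerivAt_exp (-x)).comp x (hasDerivAt_neg x)).hasDerivWithinAt)
    (exp_injective.comp neg_injective).injOn]
  simp [abs_of_pos (exp_pos _)]

lemma sub_mul_integral_rpow_mul_one_sub_rpow_neg {a p : ℝ} (ha1 : a < 1) (hp : 0 < p) :
    (p - a) * ∫ t in Ioo 0 1, t ^ (p - 1) * (1 - t) ^ (-a)
      = Gamma p * Gamma (1 - a) / Gamma (p - a) := by
  rw [show -a = 1 - a - 1 by ring, integral_rpow_mul_one_sub_rpow hp (by linarith),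
    show p + (1 - a) = p - a + 1 by ring, mul_div_Gamma_add_one]

noncomputable def lampertiIntegrand (a l c t : ℝ) : ℝ :=
  t ^ (c - 1) * (1 - t ^ l) * (1 - t) ^ (-a - 1)

noncomputable def lampertiBoundaryTerm (a l c t : ℝ) : ℝ :=
  (t ^ c - t ^ (c + l)) * (1 - t) ^ (-a)

lemma integrableOn_lampertiIntegrand {a l c : ℝ} (ha1 : a < 1) (hl : 0 ≤ l) (hc : 0 < c) :
    IntegrableOn (lampertiIntegrand a l c) (Ioo 0 1) := by
  refine Integrable.mono'
    ((integrableOn_rpow_mul_one_sub_rpow hc (sub_pos.mpr ha1)).const_mul (max l 1))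
    (by unfold lampertiIntegrand; fun_prop) ?_
  filter_upwards [ae_restrict_mem measurableSet_Ioo] with t ⟨ht0, ht1⟩
  have h1t : 0 < 1 - t := sub_pos.mpr ht1
  have hL : t ^ l ≤ 1 := rpow_le_one ht0.le ht1.le hl
  have hbound := one_sub_rpow_le_max_mul_one_sub (l := l) ht0 ht1.le
  rw [show 1 - a - 1 = -a - 1 + 1 by ring, rpow_add_one h1t.ne', lampertiIntegrand,
    norm_of_nonneg (by positivity)]
  calc t ^ (c - 1) * (1 - t ^ l) * (1 - t) ^ (-a - 1)
      = (1 - t ^ l) * (t ^ (c - 1) * (1 - t) ^ (-a - 1)) := by ring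
    _ ≤ max l 1 * (1 - t) * (t ^ (c - 1) * (1 - t) ^ (-a - 1)) := by gcongr
    _ = _ := by ring

lemma hasDerivAt_lampertiBoundaryTerm (a l c : ℝ) {t : ℝ} (ht : t ∈ Ioo (0:ℝ) 1) :
    HasDerivAt (lampertiBoundaryTerm a l c)
      (a * lampertiIntegrand a l c t
        + ((c - a) * (t ^ (c - 1) * (1 - t) ^ (-a))
          - (c + l - a) * (t ^ (c + l - 1) * (1 - t) ^ (-a)))) t := by
  have h1t : 1 - t ≠ 0 := sub_ne_zero.mpr ht.2.ne'
  have hpow : HasDerivAt (fun x : ℝ => x ^ c - x ^ (c + l))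
      (c * t ^ (c - 1) - (c + l) * t ^ (c + l - 1)) t :=
    (hasDerivAt_rpow_const (Or.inl ht.1.ne')).sub (hasDerivAt_rpow_const (Or.inl ht.1.ne'))
  have hbase : HasDerivAt (fun x : ℝ => (1 - x) ^ (-a)) (-1 * -a * (1 - t) ^ (-a - 1)) t :=
    ((hasDerivAt_id t).const_sub 1).rpow_const (Or.inl h1t)
  refine HasDerivAt.congr_deriv (f := lampertiBoundaryTerm a l c) (hpow.mul hbase) ?_
  have e1 : t ^ c = t ^ (c - 1) * t := by rw [← rpow_add_one ht.1.ne', sub_add_cancel]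
  have e2 : t ^ (c + l - 1) = t ^ (c - 1) * t ^ l := by rw [← rpow_add ht.1]; ring_nf
  have e3 : t ^ (c + l) = t ^ (c - 1) * t ^ l * t := by
    rw [← e2, ← rpow_add_one ht.1.ne', sub_add_cancel]
  have e4 : (1 - t) ^ (-a) = (1 - t) ^ (-a - 1) * (1 - t) := by
    rw [← rpow_add_one h1t, sub_add_cancel]
  rw [lampertiIntegrand, e1, e2, e3, e4]
  ring

lemma tendsto_lampertiBoundaryTerm_nhdsGT_zero (a : ℝ) {l c : ℝ} (hl : 0 ≤ l) (hc : 0 < c) :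
    Tendsto (lampertiBoundaryTerm a l c) (𝓝[>] 0) (𝓝 0) := by
  have hcont : ContinuousAt (lampertiBoundaryTerm a l c) 0 :=
    ((continuousAt_rpow_const 0 c (Or.inr hc.le)).sub
      (continuousAt_rpow_const 0 (c + l) (Or.inr (by positivity)))).mul
      ((continuousAt_const.sub continuousAt_id).rpow_const (Or.inl (by norm_num)))
  simpa [lampertiBoundaryTerm, zero_rpow hc.ne', zero_rpow (by positivity : c + l ≠ 0)]
    using hcont.tendsto.mono_left nhdsWithin_le_nhds

lemma tendsto_lampertiBoundaryTerm_nhdsLT_one {a l c : ℝ} (ha1 : a < 1) (hl : 0 ≤ l)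
    (hc : 0 ≤ c) : Tendsto (lampertiBoundaryTerm a l c) (𝓝[<] 1) (𝓝 0) := by
  have hmajor : Tendsto (fun t : ℝ => max l 1 * (1 - t) ^ (1 - a)) (𝓝[<] 1) (𝓝 0) := by
    have hcont : ContinuousAt (fun t : ℝ => max l 1 * (1 - t) ^ (1 - a)) 1 :=
      continuousAt_const.mul
        ((continuousAt_const.sub continuousAt_id).rpow_const (Or.inr (by linarith)))
    simpa [zero_rpow (by linarith : 1 - a ≠ 0)] using hcont.tendsto.mono_left nhdsWithin_le_nhds
  have hbounds : ∀ᶠ t in 𝓝[<] 1, 0 ≤ lampertiBoundaryTerm a l c t ∧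
      lampertiBoundaryTerm a l c t ≤ max l 1 * (1 - t) ^ (1 - a) := by
    filter_upwards [Ioo_mem_nhdsLT (zero_lt_one' ℝ)] with t ⟨ht0, ht1⟩
    have h1t : 0 < 1 - t := sub_pos.mpr ht1
    have hC : t ^ c ≤ 1 := rpow_le_one ht0.le ht1.le hc
    have hL : 0 ≤ 1 - t ^ l := sub_nonneg.mpr (rpow_le_one ht0.le ht1.le hl)
    have hbound := one_sub_rpow_le_max_mul_one_sub (l := l) ht0 ht1.le
    rw [lampertiBoundaryTerm, rpow_add ht0,
      show t ^ c - t ^ c * t ^ l = t ^ c * (1 - t ^ l) by ring, show 1 - a = -a + 1 by ring,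
      rpow_add_one h1t.ne']
    refine ⟨by positivity, ?_⟩
    calc t ^ c * (1 - t ^ l) * (1 - t) ^ (-a)
        ≤ 1 * (max l 1 * (1 - t)) * (1 - t) ^ (-a) := by gcongr
      _ = _ := by ring
  exact squeeze_zero' (hbounds.mono fun _ h => h.1) (hbounds.mono fun _ h => h.2) hmajor

lemma mul_integral_lampertiIntegrand {a l c : ℝ} (ha1 : a < 1) (hl : 0 ≤ l) (hc : 0 < c) :
    a * ∫ t in Ioo 0 1, lampertiIntegrand a l c t
      = (c + l - a) * (∫ t in Ioo 0 1, t ^ (c + l - 1) * (1 - t) ^ (-a))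
        - (c - a) * ∫ t in Ioo 0 1, t ^ (c - 1) * (1 - t) ^ (-a) := by
  have hbeta : ∀ p : ℝ, 0 < p →
      IntegrableOn (fun t : ℝ => t ^ (p - 1) * (1 - t) ^ (-a)) (Ioo 0 1) := fun p hp => by
    simpa using integrableOn_rpow_mul_one_sub_rpow hp (sub_pos.mpr ha1)
  have hf := (integrableOn_lampertiIntegrand ha1 hl hc).const_mul a
  have hg : IntegrableOn (fun t : ℝ => (c - a) * (t ^ (c - 1) * (1 - t) ^ (-a))
      - (c + l - a) * (t ^ (c + l - 1) * (1 - t) ^ (-a))) (Ioo 0 1) :=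
    ((hbeta c hc).const_mul _).sub ((hbeta (c + l) (by positivity)).const_mul _)
  have hftc := intervalIntegral.integral_eq_sub_of_hasDerivAt_of_tendsto zero_lt_one
    (fun t ht => hasDerivAt_lampertiBoundaryTerm a l c ht)
    ((intervalIntegrable_iff_integrableOn_Ioo_of_le zero_le_one).mpr (hf.add hg))
    (tendsto_lampertiBoundaryTerm_nhdsGT_zero a hl hc)
    (tendsto_lampertiBoundaryTerm_nhdsLT_one ha1 hl hc.le)
  rw [intervalIntegral.integral_of_le zero_le_one, integral_Ioc_eq_integral_Ioo, sub_self,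
    integral_add hf hg, integral_sub ((hbeta c hc).const_mul _)
      ((hbeta (c + l) (by positivity)).const_mul _), integral_const_mul, integral_const_mul,
    integral_const_mul] at hftc
  linarith

lemma integral_lampertiIntegrand {a l c : ℝ} (ha : 0 < a) (ha1 : a < 1) (hl : 0 ≤ l)
    (hc : 0 < c) :
    ∫ t in Ioo 0 1, lampertiIntegrand a l c t
      = -Gamma (-a) * (Gamma (c + l) / Gamma (c + l - a) - Gamma c / Gamma (c - a)) := by
  have hrel := mul_integral_lampertiIntegrand ha1 hl hc
  rw [sub_mul_integral_rpow_mul_one_sub_rpow_neg ha1 (by positivity),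
    sub_mul_integral_rpow_mul_one_sub_rpow_neg ha1 hc] at hrel
  have hGamma : Gamma (1 - a) = -a * Gamma (-a) := by
    rw [show 1 - a = -a + 1 by ring, Gamma_add_one (neg_ne_zero.mpr ha.ne')]
  refine mul_left_cancel₀ ha.ne' ?_
  rw [hrel, hGamma]
  ring

lemma laplace_integrand_eq_exp_neg_mul_lampertiIntegrand (α β l : ℝ) {x : ℝ} (hx : 0 < x) :
    (1 - exp (-l * x)) * exp (β * x) * (exp x - 1) ^ (-(α + 1))
      = exp (-x) * lampertiIntegrand α l (1 - β + α) (exp (-x)) := by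
  have hsub : 1 - exp (-x) = exp (-x) * (exp x - 1) := by
    rw [mul_sub, ← exp_add, neg_add_cancel, exp_zero, mul_one]
  rw [lampertiIntegrand, hsub, mul_rpow (exp_pos _).le (sub_nonneg.mpr (one_le_exp hx.le)),
    ← exp_mul, ← exp_mul, ← exp_mul, neg_add', show -x * l = -l * x by ring]
  have hexp : exp (-x) * exp (-x * (1 - β + α - 1)) * exp (-x * (-α - 1)) = exp (β * x) := by
    rw [← exp_add, ← exp_add]
    ring_nf
  rw [← hexp]
  ring

theorem lamperti_stable_subordinator_laplace_exponent
    (α β l : ℝ) (hα : α ∈ Set.Ioo (0:ℝ) 1) (hβ : β < α + 1) (hl : 0 ≤ l) :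
    ∫ x in Set.Ioi (0:ℝ),
        (1 - Real.exp (-l * x)) * Real.exp (β * x) * (Real.exp x - 1) ^ (-(α + 1))
      = -Real.Gamma (-α) *
          (Real.Gamma (l + 1 - β + α) / Real.Gamma (l + 1 - β)
            - Real.Gamma (1 - β + α) / Real.Gamma (1 - β)) := by
  have hsubst := integral_comp_exp_neg_Ioi (lampertiIntegrand α l (1 - β + α))
  simp only [smul_eq_mul] at hsubst
  rw [setIntegral_congr_fun measurableSet_Ioi
      (fun x hx => laplace_integrand_eq_exp_neg_mul_lampertiIntegrand α β l hx),
    hsubst, integral_lampertiIntegrand hα.1 hα.2 hl (by linarith),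
    show 1 - β + α + l = l + 1 - β + α by ring, add_sub_cancel_right, add_sub_cancel_right]
end

section
/- Let d ≥ 1, α ∈ (0,2), let σ be a finite nonzero Borel measure on the unit sphere S^{d−1} ⊂ ℝ^d, and let f : S^{d−1} → ℝ be Borel measurable with sup_{ξ} f(ξ) < α + 1 and ∫_{S^{d−1}} f(ξ)² σ(dξ) < ∞. Then ∫_{S^{d−1}} σ(dξ) ∫_0^∞ [ ( e^{r f(ξ)} r^{α+1} / (e^r − 1)^{α+1} )^{1/2} − 1 ]² · r^{−(α+1)} dr < ∞. (By Sato's criterion for equivalence of Lévy process laws, this Hellinger-type integrability implies that the law of a Lamperti stable process and the law of its short-time limiting α-stable process are mutually absolutely continuous on every finite time horizon, for a suitable choice of linear terms.) -/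
open MeasureTheory Set Real

/-!
For `r > 0` the square root of the density is `exp u` with
`u = (r c - (α + 1) log ((eʳ - 1) / r)) / 2`, and `0 ≤ log ((eʳ - 1) / r) ≤ r`. Hence near `0`
we have `(exp u - 1)² = O((1 + c²) r²)` uniformly in `c ≤ sup f`, and the integrand is
`O((1 + c²) r^(1 - α))`, integrable since `α < 2`. For `r ≥ 1` the integrand is at most
`2^(α+1) e^(-(α + 1 - c) r) + r^(-(α+1))`, integrable since `c ≤ sup f < α + 1` and `α > 0`.
So the inner integral is at most `(1 + f(ξ)²)` times a finite constant, and `1 + f²` is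
`σ`-integrable.
-/

lemma Real.abs_exp_sub_one_le_mul_exp_max (u : ℝ) : |exp u - 1| ≤ |u| * exp (max u 0) := by
  rcases le_total u 0 with hu | hu
  · have h1 : exp u ≤ 1 := exp_le_one_iff.mpr hu
    rw [abs_of_nonpos (by linarith), abs_of_nonpos hu, max_eq_right hu, exp_zero]
    linarith [add_one_le_exp u]
  · have h1 : 1 ≤ exp u := one_le_exp_iff.mpr hu
    rw [abs_of_nonneg (by linarith), abs_of_nonneg hu, max_eq_left hu]
    have := one_sub_le_exp_neg u
    rw [exp_neg] at this
    have hpos := exp_pos u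
    nlinarith [mul_inv_cancel₀ hpos.ne']

lemma Real.log_exp_sub_one_div_mem_Icc {r : ℝ} (hr : 0 < r) :
    log ((exp r - 1) / r) ∈ Icc 0 r := by
  have hlow : r ≤ exp r - 1 := by linarith [add_one_le_exp r]
  have hup : exp r - 1 ≤ r * exp r := by
    have := one_sub_le_exp_neg r
    rw [exp_neg] at this
    nlinarith [mul_inv_cancel₀ (exp_pos r).ne', exp_pos r]
  refine ⟨log_nonneg ((one_le_div hr).mpr hlow), ?_⟩
  calc log ((exp r - 1) / r) ≤ log (exp r) :=
        log_le_log (div_pos (by linarith) hr) ((div_le_iff₀' hr).mpr hup)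
    _ = r := log_exp r

noncomputable def lampertiSqrtDensity (α c r : ℝ) : ℝ :=
  (exp (r * c) * r ^ (α + 1) / (exp r - 1) ^ (α + 1)) ^ ((1 : ℝ) / 2)

lemma lampertiSqrtDensity_eq_exp (α c : ℝ) {r : ℝ} (hr : 0 < r) :
    lampertiSqrtDensity α c r = exp ((r * c - (α + 1) * log ((exp r - 1) / r)) / 2) := by
  have hE : 0 < exp r - 1 := by linarith [add_one_le_exp r]
  have hx : 0 < exp (r * c) * r ^ (α + 1) / (exp r - 1) ^ (α + 1) := by positivity
  rw [lampertiSqrtDensity, rpow_def_of_pos hx, log_div (by positivity) (by positivity),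
    log_mul (exp_pos _).ne' (by positivity), log_exp, log_rpow hr, log_rpow hE,
    log_div hE.ne' hr.ne']
  ring_nf

lemma sq_lampertiSqrtDensity_sub_one_le {α : ℝ} (c : ℝ) (hα : 0 ≤ α + 1) {r : ℝ} (hr : 0 < r) :
    (lampertiSqrtDensity α c r - 1) ^ 2 ≤ exp (max (r * c) 0) * ((|c| + (α + 1)) * r) ^ 2 / 4 := by
  obtain ⟨hL0, hLr⟩ := log_exp_sub_one_div_mem_Icc hr
  set u := (r * c - (α + 1) * log ((exp r - 1) / r)) / 2 with hu
  have hu_le : 2 * max u 0 ≤ max (r * c) 0 := by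
    have : 2 * u ≤ r * c := by nlinarith [mul_nonneg hα hL0]
    rcases le_total u 0 with h | h
    · simp [max_eq_right h]
    · rw [max_eq_left h]; exact this.trans (le_max_left _ _)
  have hu_abs : |u| ≤ (|c| + (α + 1)) * r / 2 := by
    rw [abs_le]
    constructor <;> nlinarith [mul_le_mul_of_nonneg_left (le_abs_self c) hr.le,
      mul_le_mul_of_nonneg_left (neg_abs_le c) hr.le, mul_le_mul_of_nonneg_left hLr hα,
      mul_nonneg hα hL0]
  rw [lampertiSqrtDensity_eq_exp α c hr, ← sq_abs]
  calc |exp u - 1| ^ 2 ≤ (|u| * exp (max u 0)) ^ 2 :=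
        pow_le_pow_left₀ (abs_nonneg _) (abs_exp_sub_one_le_mul_exp_max u) 2
    _ = |u| ^ 2 * exp (2 * max u 0) := by rw [mul_pow, ← exp_nat_mul]; norm_num
    _ ≤ ((|c| + (α + 1)) * r / 2) ^ 2 * exp (max (r * c) 0) := by gcongr
    _ = exp (max (r * c) 0) * ((|c| + (α + 1)) * r) ^ 2 / 4 := by ring

lemma sq_lampertiSqrtDensity_mul_rpow_le {α : ℝ} (c : ℝ) (hα : 0 ≤ α + 1) {r : ℝ}
    (hr : log 2 ≤ r) :
    lampertiSqrtDensity α c r ^ 2 * r ^ (-(α + 1)) ≤ 2 ^ (α + 1) * exp (-(α + 1 - c) * r) := by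
  have hr0 : 0 < r := (log_pos one_lt_two).trans_le hr
  have hexp : 2 ≤ exp r := by simpa [exp_log two_pos] using exp_le_exp.mpr hr
  have hL : r - log 2 ≤ log ((exp r - 1) / r) + log r := by
    have : log (exp r / 2) = r - log 2 := by rw [log_div (exp_pos r).ne' two_ne_zero, log_exp]
    rw [log_div (by linarith) hr0.ne', sub_add_cancel, ← this]
    exact log_le_log (by positivity) (by linarith)
  rw [lampertiSqrtDensity_eq_exp α c hr0, ← exp_nat_mul, rpow_def_of_pos hr0,
    rpow_def_of_pos two_pos, ← exp_add, ← exp_add, exp_le_exp]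
  push_cast
  nlinarith [mul_le_mul_of_nonneg_left hL hα]

noncomputable def lampertiHellingerMajorant (α γ r : ℝ) : ℝ :=
  if r ≤ 1 then exp (max γ 0) * (1 + (α + 1) ^ 2) / 2 * r ^ (1 - α)
  else 2 ^ (α + 1) * exp (-(α + 1 - γ) * r) + r ^ (-(α + 1))

lemma hellingerIntegrand_le_majorant {α γ c r : ℝ} (hα : 0 ≤ α + 1) (hc : c ≤ γ) (hr : 0 < r) :
    (lampertiSqrtDensity α c r - 1) ^ 2 * r ^ (-(α + 1))
      ≤ (1 + c ^ 2) * lampertiHellingerMajorant α γ r := by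
  unfold lampertiHellingerMajorant
  split_ifs with hr1
  · have hmax : max (r * c) 0 ≤ max γ 0 := by
      rcases le_total c 0 with h | h
      · exact (max_eq_right (mul_nonpos_of_nonneg_of_nonpos hr.le h)).trans_le (le_max_right _ _)
      · exact max_le_max_right 0 (by nlinarith)
    have hsq : (|c| + (α + 1)) ^ 2 ≤ 2 * (1 + (α + 1) ^ 2) * (1 + c ^ 2) := by
      nlinarith [sq_abs c, sq_nonneg (|c| - (α + 1)), mul_nonneg (sq_nonneg c) (sq_nonneg (α + 1))]
    have hpow : r ^ 2 * r ^ (-(α + 1)) = r ^ (1 - α) := by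
      rw [← rpow_natCast, ← rpow_add hr]; norm_num; ring_nf
    calc (lampertiSqrtDensity α c r - 1) ^ 2 * r ^ (-(α + 1))
        ≤ exp (max (r * c) 0) * ((|c| + (α + 1)) * r) ^ 2 / 4 * r ^ (-(α + 1)) := by
          gcongr; exact sq_lampertiSqrtDensity_sub_one_le c hα hr
      _ = exp (max (r * c) 0) * (|c| + (α + 1)) ^ 2 / 4 * (r ^ 2 * r ^ (-(α + 1))) := by ring
      _ ≤ exp (max γ 0) * (2 * (1 + (α + 1) ^ 2) * (1 + c ^ 2)) / 4 * r ^ (1 - α) := by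
          rw [hpow]; gcongr
      _ = (1 + c ^ 2) * (exp (max γ 0) * (1 + (α + 1) ^ 2) / 2 * r ^ (1 - α)) := by ring
  · have hg : 0 ≤ lampertiSqrtDensity α c r := by
      rw [lampertiSqrtDensity_eq_exp α c hr]; exact (exp_pos _).le
    have hlog2 : log 2 ≤ r := (log_two_lt_d9.trans (by norm_num)).le.trans (not_le.mp hr1).le
    calc (lampertiSqrtDensity α c r - 1) ^ 2 * r ^ (-(α + 1))
        ≤ (lampertiSqrtDensity α c r ^ 2 + 1) * r ^ (-(α + 1)) := by gcongr; nlinarith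
      _ = lampertiSqrtDensity α c r ^ 2 * r ^ (-(α + 1)) + r ^ (-(α + 1)) := by ring
      _ ≤ 2 ^ (α + 1) * exp (-(α + 1 - γ) * r) + r ^ (-(α + 1)) := by
          grw [sq_lampertiSqrtDensity_mul_rpow_le c hα hlog2]
          gcongr
      _ ≤ (1 + c ^ 2) * (2 ^ (α + 1) * exp (-(α + 1 - γ) * r) + r ^ (-(α + 1))) :=
          le_mul_of_one_le_left (by positivity) (by nlinarith)

lemma integrableOn_lampertiHellingerMajorant {α γ : ℝ} (hα0 : 0 < α) (hα2 : α < 2)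
    (hγ : γ < α + 1) : IntegrableOn (lampertiHellingerMajorant α γ) (Ioi 0) := by
  rw [← Ioc_union_Ioi_eq_Ioi zero_le_one, integrableOn_union]
  constructor
  · have h := intervalIntegral.intervalIntegrable_rpow' (a := 0) (b := 1) (r := 1 - α)
      (by linarith)
    rw [intervalIntegrable_iff, uIoc_of_le zero_le_one] at h
    refine IntegrableOn.congr_fun (h.const_mul (exp (max γ 0) * (1 + (α + 1) ^ 2) / 2))
      (fun r hr => ?_) measurableSet_Ioc
    simp [lampertiHellingerMajorant, hr.2]
  · have hexp : IntegrableOn (fun r => exp (-(α + 1 - γ) * r)) (Ioi 1) :=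
      exp_neg_integrableOn_Ioi 1 (by linarith)
    have hpow : IntegrableOn (fun r : ℝ => r ^ (-(α + 1))) (Ioi 1) :=
      integrableOn_Ioi_rpow_of_lt (by linarith) one_pos
    refine IntegrableOn.congr_fun ((hexp.const_mul (2 ^ (α + 1))).add hpow) (fun r hr => ?_)
      measurableSet_Ioi
    simp [lampertiHellingerMajorant, not_le.mpr (mem_Ioi.mp hr)]

lemma lintegral_hellingerIntegrand_le {α γ c : ℝ} (hα : 0 ≤ α + 1) (hc : c ≤ γ) :
    ∫⁻ r in Ioi 0, ENNReal.ofReal ((lampertiSqrtDensity α c r - 1) ^ 2 * r ^ (-(α + 1)))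
      ≤ ENNReal.ofReal (1 + c ^ 2)
          * ∫⁻ r in Ioi 0, ENNReal.ofReal (lampertiHellingerMajorant α γ r) := by
  rw [← lintegral_const_mul' _ _ ENNReal.ofReal_ne_top]
  refine setLIntegral_mono' measurableSet_Ioi fun r hr => ?_
  rw [← ENNReal.ofReal_mul (by positivity)]
  exact ENNReal.ofReal_le_ofReal (hellingerIntegrand_le_majorant hα hc hr)

lemma MeasureTheory.lintegral_ofReal_one_add_lt_top {X : Type*} [MeasurableSpace X]
    {μ : Measure X} [IsFiniteMeasure μ] {g : X → ℝ}
    (hg : ∫⁻ x, ENNReal.ofReal (g x) ∂μ < ⊤) : ∫⁻ x, ENNReal.ofReal (1 + g x) ∂μ < ⊤ :=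
  calc ∫⁻ x, ENNReal.ofReal (1 + g x) ∂μ ≤ ∫⁻ x, (1 + ENNReal.ofReal (g x)) ∂μ :=
        lintegral_mono fun x => by simpa using ENNReal.ofReal_add_le (p := 1) (q := g x)
    _ = μ univ + ∫⁻ x, ENNReal.ofReal (g x) ∂μ := by
        rw [lintegral_add_left measurable_const, lintegral_one]
    _ < ⊤ := ENNReal.add_lt_top.mpr ⟨measure_lt_top μ univ, hg⟩

theorem lamperti_stable_hellinger_integrability_general
    (d : ℕ) (α : ℝ) (hα : α ∈ Set.Ioo (0:ℝ) 2)
    (σ : Measure (Metric.sphere (0 : EuclideanSpace ℝ (Fin d)) 1))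
    [IsFiniteMeasure σ]
    (f : Metric.sphere (0 : EuclideanSpace ℝ (Fin d)) 1 → ℝ)
    (hbdd : BddAbove (Set.range f))
    (hγ : (⨆ ξ, f ξ) < α + 1)
    (hf2 : ∫⁻ ξ, ENNReal.ofReal ((f ξ) ^ 2) ∂σ < ⊤) :
    ∫⁻ ξ, (∫⁻ r in Set.Ioi (0:ℝ),
        ENNReal.ofReal
          (((Real.exp (r * f ξ) * r ^ (α + 1) / (Real.exp r - 1) ^ (α + 1)) ^ ((1:ℝ)/2) - 1) ^ 2
            * r ^ (-(α + 1)))) ∂σ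
      < ⊤ := by
  obtain ⟨hα0, hα2⟩ := hα
  set M := ∫⁻ r in Ioi 0, ENNReal.ofReal (lampertiHellingerMajorant α (⨆ ξ, f ξ) r)
  have hM : M < ⊤ := (integrableOn_lampertiHellingerMajorant hα0 hα2 hγ).lintegral_lt_top
  calc _ ≤ ∫⁻ ξ, ENNReal.ofReal (1 + f ξ ^ 2) * M ∂σ :=
        lintegral_mono fun ξ => lintegral_hellingerIntegrand_le (by linarith) (le_ciSup hbdd ξ)
    _ = (∫⁻ ξ, ENNReal.ofReal (1 + f ξ ^ 2) ∂σ) * M := lintegral_mul_const' _ _ hM.ne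
    _ < ⊤ := ENNReal.mul_lt_top (lintegral_ofReal_one_add_lt_top hf2) hM

theorem lamperti_stable_hellinger_integrability
    (d : ℕ) (hd : 1 ≤ d) (α : ℝ) (hα : α ∈ Set.Ioo (0:ℝ) 2)
    (σ : Measure (Metric.sphere (0 : EuclideanSpace ℝ (Fin d)) 1))
    [IsFiniteMeasure σ] (hσ : σ ≠ 0)
    (f : Metric.sphere (0 : EuclideanSpace ℝ (Fin d)) 1 → ℝ)
    (hf : Measurable f) (hbdd : BddAbove (Set.range f))
    (hγ : (⨆ ξ, f ξ) < α + 1)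
    (hf2 : ∫⁻ ξ, ENNReal.ofReal ((f ξ) ^ 2) ∂σ < ⊤) :
    ∫⁻ ξ, (∫⁻ r in Set.Ioi (0:ℝ),
        ENNReal.ofReal
          (((Real.exp (r * f ξ) * r ^ (α + 1) / (Real.exp r - 1) ^ (α + 1)) ^ ((1:ℝ)/2) - 1) ^ 2
            * r ^ (-(α + 1)))) ∂σ
      < ⊤ :=
  lamperti_stable_hellinger_integrability_general d α hα σ f hbdd hγ hf2
end

section
/- Let α ∈ (0,2) and β < α + 1, and let g : ℝ → ℝ be a bounded continuous function that vanishes on a neighborhood of 0 (i.e. there is δ > 0 with g ≡ 0 on (−δ, δ)). Then lim_{h → ∞} h · ∫_0^∞ g(h^{−1/2} r) · e^{β r}(e^r − 1)^{−(α+1)} dr = 0. (This is the vague convergence to zero of the rescaled Lamperti stable Lévy measures h·T_{h^{−1/2}}ν, the key step in proving that a Lamperti stable process rescaled by h^{−1/2} converges in long time to a Brownian motion.) -/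
/-!
Put `s = √h`. If `g` vanishes on `(-δ, δ)`, the integrand vanishes for `r < δ s`; for
`r ≥ log 2` we have `e^r - 1 ≥ e^r / 2`, so the Lévy density is at most `2^(α+1) e^{-εr}` with
`ε = α + 1 - β > 0`. Hence the integral is `O(e^{-εδs/2})`, and `h e^{-εδ√h/2} → 0`.
-/

open MeasureTheory Set Filter Real

lemma exp_sub_one_rpow_neg_le {p r : ℝ} (hp : 0 ≤ p) (hr : log 2 ≤ r) :
    (exp r - 1) ^ (-p) ≤ 2 ^ p * exp (-(p * r)) := by
  have two_le_exp : 2 ≤ exp r := by simpa [exp_log two_pos] using exp_le_exp.mpr hr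
  calc (exp r - 1) ^ (-p) ≤ (exp r / 2) ^ (-p) :=
        rpow_le_rpow_of_nonpos (by positivity) (by linarith) (neg_nonpos.mpr hp)
    _ = 2 ^ p * exp (-(p * r)) := by
        rw [div_rpow (exp_pos r).le zero_le_two, ← exp_mul, rpow_neg zero_le_two, div_inv_eq_mul,
          mul_comm, mul_neg, mul_comm r]

section RescaledLevyIntegral

variable {g : ℝ → ℝ} {C δ p β s : ℝ}

/-- The decay `e^{-εr}` is split as `e^{-εδs/2} e^{-εr/2}`, which is valid on the support
`r ≥ δ s` and leaves an integrable majorant independent of `s`. -/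
lemma norm_rescaled_levy_integrand_le (hC : ∀ x, |g x| ≤ C)
    (hvan : ∀ x, |x| < δ → g x = 0) (hp : 0 ≤ p) (hβ : β < p) (hs : 0 < s)
    (hδs : log 2 ≤ δ * s) {r : ℝ} (hr : 0 < r) :
    ‖g (s⁻¹ * r) * exp (β * r) * (exp r - 1) ^ (-p)‖ ≤
      C * 2 ^ p * exp (-((p - β) / 2) * (δ * s)) * exp (-((p - β) / 2) * r) := by
  have hC0 : 0 ≤ C := (abs_nonneg _).trans (hC 0)
  rcases lt_or_ge r (δ * s) with hlt | hge
  · have : g (s⁻¹ * r) = 0 := hvan _ <| by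
      rwa [abs_of_pos (by positivity), inv_mul_eq_div, div_lt_iff₀ hs]
    rw [this, zero_mul, zero_mul, norm_zero]
    positivity
  · have hpos : 0 < exp r - 1 := by linarith [add_one_lt_exp hr.ne']
    rw [Real.norm_eq_abs, abs_mul, abs_mul, abs_of_pos (exp_pos _),
      abs_of_pos (rpow_pos_of_pos hpos _)]
    calc |g (s⁻¹ * r)| * exp (β * r) * (exp r - 1) ^ (-p)
        ≤ C * exp (β * r) * (2 ^ p * exp (-(p * r))) := by
          gcongr
          · exact hC _
          · exact exp_sub_one_rpow_neg_le hp (hδs.trans hge)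
      _ = C * 2 ^ p * exp (-(p - β) * r) := by
          rw [mul_mul_mul_comm, ← exp_add]
          ring_nf
      _ ≤ C * 2 ^ p * exp (-((p - β) / 2) * (δ * s) + -((p - β) / 2) * r) := by
          gcongr
          nlinarith
      _ = C * 2 ^ p * exp (-((p - β) / 2) * (δ * s)) * exp (-((p - β) / 2) * r) := by
          rw [exp_add, mul_assoc]; ring

lemma norm_rescaled_levy_integral_le (hC : ∀ x, |g x| ≤ C)
    (hvan : ∀ x, |x| < δ → g x = 0) (hp : 0 ≤ p) (hβ : β < p) (hs : 0 < s)
    (hδs : log 2 ≤ δ * s) :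
    ‖∫ r in Ioi (0 : ℝ), g (s⁻¹ * r) * exp (β * r) * (exp r - 1) ^ (-p)‖ ≤
      C * 2 ^ p * (2 / (p - β)) * exp (-((p - β) * δ / 2 * s)) := by
  have hε : -((p - β) / 2) < 0 := by linarith
  calc ‖∫ r in Ioi (0 : ℝ), g (s⁻¹ * r) * exp (β * r) * (exp r - 1) ^ (-p)‖
      ≤ ∫ r in Ioi (0 : ℝ),
          C * 2 ^ p * exp (-((p - β) / 2) * (δ * s)) * exp (-((p - β) / 2) * r) :=
        norm_integral_le_of_norm_le ((integrableOn_exp_mul_Ioi hε 0).const_mul _) <|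
          (ae_restrict_iff' measurableSet_Ioi).mpr <| ae_of_all _ fun _ hr ↦
            norm_rescaled_levy_integrand_le hC hvan hp hβ hs hδs hr
    _ = C * 2 ^ p * (2 / (p - β)) * exp (-((p - β) * δ / 2 * s)) := by
        rw [integral_const_mul, integral_exp_mul_Ioi hε]
        have : p - β ≠ 0 := by linarith
        field_simp
        simp

end RescaledLevyIntegral

lemma tendsto_mul_exp_neg_mul_sqrt_atTop {c : ℝ} (hc : 0 < c) :
    Tendsto (fun h : ℝ ↦ h * exp (-(c * √h))) atTop (nhds 0) := by
  have hsq := (tendsto_pow_mul_exp_neg_atTop_nhds_zero 2).comp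
    (tendsto_sqrt_atTop.const_mul_atTop hc)
  refine (by simpa using hsq.const_mul (c ^ 2)⁻¹ :
    Tendsto (fun h ↦ (c ^ 2)⁻¹ * ((c * √h) ^ 2 * exp (-(c * √h)))) atTop (nhds 0)).congr' ?_
  filter_upwards [eventually_ge_atTop 0] with h hh
  simp only [mul_pow, sq_sqrt hh]
  field_simp

theorem lamperti_stable_rescaled_levy_measure_vague_limit_general
    (α β : ℝ) (hα : α ∈ Set.Ioo (0:ℝ) 2) (hβ : β < α + 1)
    (g : ℝ → ℝ) (hgbdd : ∃ C : ℝ, ∀ x : ℝ, |g x| ≤ C)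
    (hgvan : ∃ δ > (0:ℝ), ∀ x : ℝ, |x| < δ → g x = 0) :
    Filter.Tendsto
      (fun h : ℝ => h * ∫ r in Set.Ioi (0:ℝ),
        g (h ^ (-(1:ℝ)/2) * r) * Real.exp (β * r) * (Real.exp r - 1) ^ (-(α + 1)))
      Filter.atTop (nhds 0) := by
  obtain ⟨C, hC⟩ := hgbdd
  obtain ⟨δ, hδ, hvan⟩ := hgvan
  have hp : 0 ≤ α + 1 := by linarith [hα.1]
  have hc : 0 < (α + 1 - β) * δ / 2 := by have := sub_pos.mpr hβ; positivity
  have hsqrt_pos : ∀ᶠ h : ℝ in atTop, 0 < √h := tendsto_sqrt_atTop.eventually_gt_atTop 0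
  have hδs : ∀ᶠ h : ℝ in atTop, log 2 ≤ δ * √h :=
    (tendsto_sqrt_atTop.const_mul_atTop hδ).eventually_ge_atTop _
  refine squeeze_zero_norm' ?_ <| by
    simpa only [mul_zero] using
      (tendsto_mul_exp_neg_mul_sqrt_atTop hc).const_mul (C * 2 ^ (α + 1) * (2 / (α + 1 - β)))
  filter_upwards [hsqrt_pos, hδs, eventually_ge_atTop 0] with h hs hδs hh
  have hrpow : h ^ (-(1:ℝ)/2) = (√h)⁻¹ := by rw [neg_div, rpow_neg hh, sqrt_eq_rpow]
  rw [hrpow, norm_mul, Real.norm_eq_abs, abs_of_nonneg hh, mul_left_comm]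
  exact mul_le_mul_of_nonneg_left (norm_rescaled_levy_integral_le hC hvan hp hβ hs hδs) hh

theorem lamperti_stable_rescaled_levy_measure_vague_limit
    (α β : ℝ) (hα : α ∈ Set.Ioo (0:ℝ) 2) (hβ : β < α + 1)
    (g : ℝ → ℝ) (hg : Continuous g) (hgbdd : ∃ C : ℝ, ∀ x : ℝ, |g x| ≤ C)
    (hgvan : ∃ δ > (0:ℝ), ∀ x : ℝ, |x| < δ → g x = 0) :
    Filter.Tendsto
      (fun h : ℝ => h * ∫ r in Set.Ioi (0:ℝ),
        g (h ^ (-(1:ℝ)/2) * r) * Real.exp (β * r) * (Real.exp r - 1) ^ (-(α + 1)))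
      Filter.atTop (nhds 0) :=
  lamperti_stable_rescaled_levy_measure_vague_limit_general α β hα hβ g hgbdd hgvan
end
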